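/- arXiv:1612.06058 — 2 statements merged into one kernel-verified Lean document; each statement's English description precedes it below -/
import Mathlib

section
/- Let (E_i)_{i≥1} be independent identically distributed random variables, each exponentially distributed with rate 1, on a probability space. Set S_0 = 0, S_k = E_1 + ⋯ + E_k for k ≥ 1, and define the Poisson process N(t) = #{k ≥ 1 : S_k ≤ t} for t ≥ 0. Fix γ > 0 and, for n ≥ 1, let f_n(t) = n^{−γ} N(n^{γ} t) and g_n(t) = inf{s ≥ 0 : f_n(s) = n^{−γ} ⌊n^{γ} t⌋}. Then almost surely, both f_n and g_n converge, as n → ∞, to the identity function uniformly on every compact subset of [0,∞). -/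
/-!
By the strong law of large numbers `S k / k → 1` almost surely, and `S` is strictly increasing
since the `E i` are almost surely positive. For such a path, both `u ↦ S ⌊u⌋₊` and its inverse,
the counting function `N`, stay within `ε u + C_ε` of the identity on `[0, ∞)`; rescaling by
`c = n ^ γ → ∞` turns this into the uniform bound `ε T + C_ε / c` on `[0, T]`. Finally
`gₙ t = S ⌊c t⌋₊ / c` is the left end of the interval on which `fₙ` equals `⌊c t⌋ / c`.
-/

open MeasureTheory Filter Set
open scoped Topology

section RenewalCount

def DeviatesSublinearlyFromId (h : ℝ → ℝ) : Prop :=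
  ∀ ε > 0, ∃ C, ∀ u ≥ 0, |h u - u| ≤ ε * u + C

theorem DeviatesSublinearlyFromId.tendstoUniformlyOn_rescale {h : ℝ → ℝ}
    (hh : DeviatesSublinearlyFromId h) {ι : Type*} {l : Filter ι} {c : ι → ℝ}
    (hc : Tendsto c l atTop) (T : ℝ) :
    TendstoUniformlyOn (fun n t => (c n)⁻¹ * h (c n * t)) id l (Icc 0 T) := by
  rw [Metric.tendstoUniformlyOn_iff]
  intro ε hε
  obtain ⟨C, hC⟩ := hh (ε / 2 / (|T| + 1)) (by positivity)
  filter_upwards [hc.eventually_gt_atTop 0, hc.eventually_gt_atTop (2 * C / ε)]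
    with n hpos hlarge t ⟨ht0, htT⟩
  have hslope : ε / 2 / (|T| + 1) * t < ε / 2 := by
    rw [div_mul_eq_mul_div, div_lt_iff₀ (by positivity)]
    nlinarith [le_abs_self T]
  have hconst : C / c n < ε / 2 := by
    rw [div_lt_iff₀ hpos]
    rw [div_lt_iff₀ hε] at hlarge
    linarith
  calc dist (id t) ((c n)⁻¹ * h (c n * t))
      = (c n)⁻¹ * |h (c n * t) - c n * t| := by
        rw [Real.dist_eq, abs_sub_comm, ← abs_of_pos (inv_pos.2 hpos), ← abs_mul,
          abs_of_pos (inv_pos.2 hpos), mul_sub, inv_mul_cancel_left₀ hpos.ne']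
        rfl
    _ ≤ (c n)⁻¹ * (ε / 2 / (|T| + 1) * (c n * t) + C) :=
        mul_le_mul_of_nonneg_left (hC _ (by positivity)) (by positivity)
    _ = ε / 2 / (|T| + 1) * t + C / c n := by field_simp
    _ < ε := by linarith

variable {a : ℕ → ℝ}

theorem exists_forall_abs_sub_le_of_tendsto_div
    (hlim : Tendsto (fun k : ℕ => a k / k) atTop (𝓝 1)) {ε : ℝ} (hε : 0 < ε) :
    ∃ C, ∀ k : ℕ, |a k - k| ≤ ε * k + C := by
  obtain ⟨K, hK⟩ := Metric.tendsto_atTop.mp hlim ε hε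
  set C := ∑ j ∈ Finset.range (K + 1), |a j - j|
  refine ⟨C, fun k => ?_⟩
  have hεk : 0 ≤ ε * k := by positivity
  rcases lt_or_ge k (K + 1) with hk | hk
  · have : |a k - k| ≤ C :=
      Finset.single_le_sum (f := fun j => |a j - j|) (fun _ _ => abs_nonneg _)
        (Finset.mem_range.mpr hk)
    linarith
  · have hkpos : (0 : ℝ) < k := by exact_mod_cast (by omega : 0 < k)
    have hdev : |a k / k - 1| < ε := by simpa [Real.dist_eq] using hK k (by omega)
    have : |a k - k| = |a k / k - 1| * k := by
      rw [← abs_of_pos hkpos, ← abs_mul, abs_of_pos hkpos, sub_mul, div_mul_cancel₀ _ hkpos.ne',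
        one_mul]
    have hC : 0 ≤ C := Finset.sum_nonneg fun _ _ => abs_nonneg _
    nlinarith

theorem deviatesSublinearlyFromId_comp_floor
    (hlim : Tendsto (fun k : ℕ => a k / k) atTop (𝓝 1)) :
    DeviatesSublinearlyFromId (fun u => a ⌊u⌋₊) := by
  intro ε hε
  obtain ⟨C, hC⟩ := exists_forall_abs_sub_le_of_tendsto_div hlim hε
  refine ⟨C + 1, fun u hu => ?_⟩
  have hfloor := Nat.abs_sub_floor_le hu
  have := mul_le_mul_of_nonneg_left (Nat.floor_le hu) hε.le
  calc |a ⌊u⌋₊ - u| ≤ |a ⌊u⌋₊ - ⌊u⌋₊| + |u - ⌊u⌋₊| := by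
        rw [abs_sub_comm u]; exact abs_sub_le _ _ _
    _ ≤ ε * u + (C + 1) := by linarith [hC ⌊u⌋₊]

noncomputable def renewalCount (a : ℕ → ℝ) (u : ℝ) : ℕ :=
  {k : ℕ | 1 ≤ k ∧ a k ≤ u}.ncard

theorem renewalCount_eq (hmono : StrictMono a) {u : ℝ} {m : ℕ}
    (hm : a m ≤ u) (hm' : u < a (m + 1)) : renewalCount a u = m := by
  have : {k : ℕ | 1 ≤ k ∧ a k ≤ u} = Icc 1 m := by
    ext k
    simp only [mem_ofPred_eq, mem_Icc, and_congr_right_iff]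
    intro _
    exact ⟨fun hk => Nat.lt_succ_iff.mp (hmono.lt_iff_lt.mp (hk.trans_lt hm')),
      fun hk => (hmono.monotone hk).trans hm⟩
  rw [renewalCount, this, ← Finset.coe_Icc, ncard_coe_finset, Nat.card_Icc, Nat.add_sub_cancel]

theorem exists_le_lt_succ_of_tendsto_atTop (hinf : Tendsto a atTop atTop) {u : ℝ}
    (hu : a 0 ≤ u) : ∃ m, a m ≤ u ∧ u < a (m + 1) := by
  classical
  have hex : ∃ m, u < a (m + 1) :=
    ((tendsto_add_atTop_iff_nat 1).2 hinf |>.eventually_gt_atTop u).exists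
  refine ⟨Nat.find hex, ?_, Nat.find_spec hex⟩
  rcases hm : Nat.find hex with _ | m
  · exact hu
  · exact not_lt.mp (Nat.find_min hex (hm ▸ Nat.lt_succ_self m))

theorem tendsto_atTop_of_tendsto_div (hlim : Tendsto (fun k : ℕ => a k / k) atTop (𝓝 1)) :
    Tendsto a atTop atTop := by
  refine (hlim.pos_mul_atTop one_pos tendsto_natCast_atTop_atTop).congr' ?_
  filter_upwards [eventually_ne_atTop 0] with k hk
  exact div_mul_cancel₀ _ (Nat.cast_ne_zero.2 hk)

theorem deviatesSublinearlyFromId_renewalCount (hmono : StrictMono a) (ha0 : a 0 ≤ 0)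
    (hlim : Tendsto (fun k : ℕ => a k / k) atTop (𝓝 1)) :
    DeviatesSublinearlyFromId (fun u => (renewalCount a u : ℝ)) := by
  intro ε hε
  obtain ⟨C, hC⟩ :=
    exists_forall_abs_sub_le_of_tendsto_div hlim (lt_min (half_pos hε) one_half_pos)
  set δ := min (ε / 2) (1 / 2)
  have hC0 : 0 ≤ C := by simpa using (abs_nonneg _).trans (hC 0)
  refine ⟨2 * C + 2, fun u hu => ?_⟩
  obtain ⟨m, hm, hm'⟩ :=
    exists_le_lt_succ_of_tendsto_atTop (tendsto_atTop_of_tendsto_div hlim) (ha0.trans hu)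
  dsimp only
  rw [renewalCount_eq hmono hm hm']
  have hδ : δ ≤ 1 / 2 := min_le_right _ _
  have hδε : δ * u ≤ ε / 2 * u := mul_le_mul_of_nonneg_right (min_le_left _ _) hu
  have hlow := (abs_le.mp (hC m)).1
  have hup := (abs_le.mp (hC (m + 1))).2
  push_cast at hup
  -- `a m ≤ u` and `a m ≥ (1 - δ) m - C` with `δ ≤ 1/2` bound `m` linearly in `u`
  have hm_le : (m : ℝ) ≤ 2 * u + 2 * C := by nlinarith [mul_le_mul_of_nonneg_left hδ m.cast_nonneg]
  have := mul_le_mul_of_nonneg_left hm_le (show 0 ≤ δ by positivity)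
  rw [abs_le]
  constructor <;> nlinarith

theorem setOf_nonneg_renewalCount_eq (hmono : StrictMono a) (ha0 : a 0 = 0)
    (hinf : Tendsto a atTop atTop) (m : ℕ) :
    {u | 0 ≤ u ∧ renewalCount a u = m} = Ico (a m) (a (m + 1)) := by
  ext u
  constructor
  · rintro ⟨hu, rfl⟩
    obtain ⟨k, hk, hk'⟩ := exists_le_lt_succ_of_tendsto_atTop hinf (ha0.trans_le hu)
    rw [renewalCount_eq hmono hk hk']
    exact ⟨hk, hk'⟩
  · rintro ⟨hm, hm'⟩
    exact ⟨ha0 ▸ (hmono.monotone m.zero_le).trans hm, renewalCount_eq hmono hm hm'⟩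

theorem sInf_setOf_rescaled_renewalCount_eq (hmono : StrictMono a) (ha0 : a 0 = 0)
    (hinf : Tendsto a atTop atTop) {c : ℝ} (hc : 0 < c) (m : ℕ) :
    sInf {s | 0 ≤ s ∧ c⁻¹ * renewalCount a (c * s) = c⁻¹ * m} = c⁻¹ * a m := by
  have : {s | 0 ≤ s ∧ c⁻¹ * renewalCount a (c * s) = c⁻¹ * m}
      = (c * ·) ⁻¹' {u | 0 ≤ u ∧ renewalCount a u = m} := by
    ext s
    simp [mul_nonneg_iff_of_pos_left hc, hc.ne']
  rw [this, setOf_nonneg_renewalCount_eq hmono ha0 hinf, preimage_const_mul_Ico₀ _ _ hc,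
    csInf_Ico (div_lt_div_of_pos_right (hmono m.lt_succ_self) hc), inv_mul_eq_div]

end RenewalCount

section ExponentialCDF

open ProbabilityTheory

variable {Ω : Type*} [MeasurableSpace Ω] {P : Measure Ω} {X : Ω → ℝ}

def HasUnitExpCDF (P : Measure Ω) (X : Ω → ℝ) : Prop :=
  ∀ x : ℝ, 0 ≤ x → P {ω | X ω ≤ x} = ENNReal.ofReal (1 - Real.exp (-x))

theorem measure_le_zero_eq_zero_of_exp_cdf (hX : HasUnitExpCDF P X) :
    P {ω | X ω ≤ 0} = 0 := by
  simpa using hX 0 le_rfl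

theorem ae_pos_of_exp_cdf (hX : HasUnitExpCDF P X) :
    ∀ᵐ ω ∂P, 0 < X ω := by
  simpa only [ae_iff, not_lt] using measure_le_zero_eq_zero_of_exp_cdf hX

theorem map_eq_expMeasure_one_of_exp_cdf [IsProbabilityMeasure P] (hm : Measurable X)
    (hX : HasUnitExpCDF P X) :
    P.map X = expMeasure 1 := by
  have := isProbabilityMeasure_expMeasure one_pos
  refine Measure.ext_of_Iic _ _ fun x => ?_
  rw [Measure.map_apply hm measurableSet_Iic, ← ofReal_cdf, cdf_expMeasure_eq one_pos, one_mul]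
  split_ifs with hx
  · exact hX x hx
  · rw [ENNReal.ofReal_zero, ← nonpos_iff_eq_zero, ← measure_le_zero_eq_zero_of_exp_cdf hX]
    exact measure_mono fun ω (hω : X ω ≤ x) => hω.trans (not_le.mp hx).le

theorem lintegral_ofReal_eq_one_of_exp_cdf [IsProbabilityMeasure P] (hm : Measurable X)
    (hX : HasUnitExpCDF P X) :
    ∫⁻ ω, ENNReal.ofReal (X ω) ∂P = 1 := by
  have htail : ∀ t ∈ Ioi (0 : ℝ), P {ω | t < X ω} = ENNReal.ofReal (Real.exp (-t)) := by
    intro t ht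
    rw [show {ω | t < X ω} = {ω | X ω ≤ t}ᶜ by ext; simp,
      prob_compl_eq_one_sub (measurableSet_le hm measurable_const), hX t (le_of_lt ht),
      ← ENNReal.ofReal_one,
      ← ENNReal.ofReal_sub _ (sub_nonneg.2 (Real.exp_le_one_iff.2 (by simpa using ht.le)))]
    ring_nf
  rw [lintegral_eq_lintegral_meas_lt P ((ae_pos_of_exp_cdf hX).mono fun _ h => h.le)
      hm.aemeasurable, setLIntegral_congr_fun measurableSet_Ioi htail,
    ← ofReal_integral_eq_lintegral_ofReal (integrableOn_exp_neg_Ioi 0)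
      (ae_of_all _ fun _ => (Real.exp_pos _).le), integral_exp_neg_Ioi_zero, ENNReal.ofReal_one]

theorem integrable_of_exp_cdf [IsProbabilityMeasure P] (hm : Measurable X)
    (hX : HasUnitExpCDF P X) :
    Integrable X P := by
  refine ⟨hm.aestronglyMeasurable, ?_⟩
  rw [hasFiniteIntegral_iff_ofReal ((ae_pos_of_exp_cdf hX).mono fun _ h => h.le),
    lintegral_ofReal_eq_one_of_exp_cdf hm hX]
  exact ENNReal.one_lt_top

theorem integral_eq_one_of_exp_cdf [IsProbabilityMeasure P] (hm : Measurable X)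
    (hX : HasUnitExpCDF P X) :
    ∫ ω, X ω ∂P = 1 := by
  rw [integral_eq_lintegral_of_nonneg_ae ((ae_pos_of_exp_cdf hX).mono fun _ h => h.le)
    hm.aestronglyMeasurable, lintegral_ofReal_eq_one_of_exp_cdf hm hX, ENNReal.toReal_one]

theorem ae_tendsto_sum_range_div_of_iIndepFun_exp [IsProbabilityMeasure P] {E : ℕ → Ω → ℝ}
    (hmeas : ∀ i, Measurable (E i)) (hindep : iIndepFun E P)
    (hexp : ∀ i, HasUnitExpCDF P (E i)) :
    ∀ᵐ ω ∂P, Tendsto (fun k : ℕ => (∑ i ∈ Finset.range k, E i ω) / k) atTop (𝓝 1) := by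
  have hlaw i := map_eq_expMeasure_one_of_exp_cdf (hmeas i) (hexp i)
  simpa only [integral_eq_one_of_exp_cdf (hmeas 0) (hexp 0)] using
    strong_law_ae_real E (integrable_of_exp_cdf (hmeas 0) (hexp 0))
      (fun i j hij => hindep.indepFun hij)
      fun i => ⟨(hmeas i).aemeasurable, (hmeas 0).aemeasurable, by rw [hlaw i, hlaw 0]⟩

end ExponentialCDF

/-- functional law of large numbers for the Poisson process.
Let `(Eᵢ)` be i.i.d. rate-one exponential random variables, `Sₖ = E₀ + ⋯ + E_{k-1}`
(`S₀ = 0`), and `N(t) = #{k ≥ 1 : Sₖ ≤ t}`. Fix `γ > 0` and set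
`fₙ(t) = n^{-γ} N(n^γ t)` and `gₙ(t) = inf{s ≥ 0 : fₙ(s) = n^{-γ}⌊n^γ t⌋}`.
Then almost surely both `fₙ` and `gₙ` converge to the identity uniformly on
every compact subset of `[0,∞)`. -/
theorem poisson_process_time_changes_tendsto_id
    {Ω : Type*} [MeasurableSpace Ω] (P : Measure Ω) [IsProbabilityMeasure P]
    (E : ℕ → Ω → ℝ)
    (hE_meas : ∀ i, Measurable (E i))
    (hE_indep : ProbabilityTheory.iIndepFun E P)
    (hE_exp : ∀ i, ∀ x : ℝ, 0 ≤ x →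
      P {ω | E i ω ≤ x} = ENNReal.ofReal (1 - Real.exp (-x)))
    (S : ℕ → Ω → ℝ) (hS : ∀ k ω, S k ω = ∑ i ∈ Finset.range k, E i ω)
    (N : ℝ → Ω → ℕ) (hN : ∀ t ω, N t ω = Set.ncard {k : ℕ | 1 ≤ k ∧ S k ω ≤ t})
    (γ : ℝ) (hγ : 0 < γ)
    (fseq : ℕ → Ω → ℝ → ℝ)
    (hf : ∀ n ω t, fseq n ω t = ((n : ℝ) ^ γ)⁻¹ * N ((n : ℝ) ^ γ * t) ω)
    (gseq : ℕ → Ω → ℝ → ℝ)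
    (hg : ∀ n ω t, gseq n ω t =
      sInf {s : ℝ | 0 ≤ s ∧ fseq n ω s = ((n : ℝ) ^ γ)⁻¹ * (⌊(n : ℝ) ^ γ * t⌋ : ℝ)}) :
    ∀ᵐ ω ∂P, ∀ T : ℝ, 0 < T →
      TendstoUniformlyOn (fun n t => fseq n ω t) id atTop (Set.Icc 0 T) ∧
      TendstoUniformlyOn (fun n t => gseq n ω t) id atTop (Set.Icc 0 T) := by
  filter_upwards [ae_tendsto_sum_range_div_of_iIndepFun_exp hE_meas hE_indep hE_exp,
    ae_all_iff.2 fun i => ae_pos_of_exp_cdf (hE_exp i)] with ω hlim hpos T _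
  set a : ℕ → ℝ := fun k => S k ω
  have ha : a = fun k => ∑ i ∈ Finset.range k, E i ω := funext fun k => hS k ω
  have hmono : StrictMono a := ha ▸ strictMono_nat_of_lt_succ fun k => by
    simpa [Finset.sum_range_succ] using hpos k
  have ha0 : a 0 = 0 := by simp [ha]
  replace hlim : Tendsto (fun k : ℕ => a k / k) atTop (𝓝 1) := ha ▸ hlim
  have hscale : Tendsto (fun n : ℕ => (n : ℝ) ^ γ) atTop atTop :=
    (tendsto_rpow_atTop hγ).comp tendsto_natCast_atTop_atTop
  constructor
  · refine ((deviatesSublinearlyFromId_renewalCount hmono ha0.le hlim).tendstoUniformlyOn_rescale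
      hscale T).congr (Eventually.of_forall fun n t _ => ?_)
    simp only [hf, hN]
    rfl
  · refine ((deviatesSublinearlyFromId_comp_floor hlim).tendstoUniformlyOn_rescale
      hscale T).congr ?_
    filter_upwards [eventually_gt_atTop 0] with n hn t ⟨ht, _⟩
    have hc : 0 < (n : ℝ) ^ γ := by positivity
    simp only [hg, hf, hN, ← natCast_floor_eq_intCast_floor (by positivity : 0 ≤ (n : ℝ) ^ γ * t)]
    exact (sInf_setOf_rescaled_renewalCount_eq hmono ha0 (tendsto_atTop_of_tendsto_div hlim) hc
      _).symm
end

section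
/- Let a_n → a and b_n → b with a, b > 0. For each n, let f_n : [0,∞) → ℝ be a càdlàg function taking values in {0,1} and vanishing on (a_n, ∞), and let F_n be a (continuous) increasing bijection from [0,a_n] onto [0,b_n], extended to equal b_n on (a_n,∞), whose right derivative F_n' exists everywhere and is càdlàg. Assume: (1) F_n converges uniformly on [0,∞) to a continuous function F whose right derivative F' exists everywhere and is càdlàg; (2) F_n' converges to F' in the Skorokhod (J1) sense; (3) the measures 1_{{x ≤ a_n}} 1_{{f_n(x)=1}} dx converge weakly to λ 1_{{x ≤ a}} dx for some λ ≥ 0. Then the measures 1_{{x ≤ b_n}} 1_{{f_n(F_n^{−1}(x))=1}} dx converge weakly to λ 1_{{x ≤ b}} dx. -/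
open MeasureTheory Filter Set
open scoped ENNReal NNReal

/-- A function is càdlàg on `[0,∞)`: right-continuous at every `t ≥ 0` and
with left limits at every `t > 0`. -/
def Cadlag (f : ℝ → ℝ) : Prop :=
  (∀ t : ℝ, 0 ≤ t → ContinuousWithinAt f (Set.Ici t) t) ∧
  ∀ t : ℝ, 0 < t → ∃ l : ℝ, Filter.Tendsto f (nhdsWithin t (Set.Iio t)) (nhds l)

/-- Skorokhod (J1) convergence of càdlàg functions from `[0,∞)` to `ℝ`:
there exist continuous strictly increasing bijections `λₙ` of `[0,∞)` such that
`λₙ → id` and `hₙ ∘ λₙ → h` uniformly on every compact set. -/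
def SkorokhodTendsto (h : ℕ → ℝ → ℝ) (l : ℝ → ℝ) : Prop :=
  ∃ lam : ℕ → ℝ → ℝ,
    (∀ n, ContinuousOn (lam n) (Set.Ici 0) ∧ StrictMonoOn (lam n) (Set.Ici 0) ∧
      Set.BijOn (lam n) (Set.Ici 0) (Set.Ici 0)) ∧
    (∀ T : ℝ, 0 < T →
      TendstoUniformlyOn (fun n t => lam n t) id atTop (Set.Icc 0 T)) ∧
    (∀ T : ℝ, 0 < T →
      TendstoUniformlyOn (fun n t => h n (lam n t)) l atTop (Set.Icc 0 T))

lemma meas_comp_countable {g : ℝ → ℝ} (hg : Measurable g) (hc : (Set.range g).Countable)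
    (f : ℝ → ℝ) : Measurable (f ∘ g) := by
  intro s hs
  have : (f ∘ g) ⁻¹' s = g ⁻¹' (f ⁻¹' s ∩ Set.range g) := by
    ext x; simp [Set.mem_preimage, Function.comp]
  rw [this]
  exact hg ((hc.mono (Set.inter_subset_right)).measurableSet)

lemma measurable_of_rightCont {f : ℝ → ℝ}
    (hf : ∀ t : ℝ, ContinuousWithinAt f (Set.Ici t) t) : Measurable f := by
  set r : ℕ → ℝ → ℝ := fun k x => (⌈x * 2 ^ k⌉ : ℝ) / 2 ^ k with hr
  have hpow : ∀ k : ℕ, (0:ℝ) < 2 ^ k := fun k => by positivity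
  have hrmono : ∀ k, Monotone (r k) := by
    intro k x y hxy
    have h2 : x * 2 ^ k ≤ y * 2 ^ k := mul_le_mul_of_nonneg_right hxy (hpow k).le
    have : (⌈x * 2 ^ k⌉ : ℤ) ≤ ⌈y * 2 ^ k⌉ := Int.ceil_le_ceil h2
    exact (div_le_div_iff_of_pos_right (hpow k)).mpr (by exact_mod_cast this)
  have hrrange : ∀ k, (Set.range (r k)).Countable := by
    intro k
    have : Set.range (r k) ⊆ Set.range (fun m : ℤ => (m : ℝ) / 2 ^ k) := by
      rintro y ⟨x, rfl⟩; exact ⟨⌈x * 2 ^ k⌉, rfl⟩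
    exact (Set.countable_range _).mono this
  have hmeas : ∀ k, Measurable (f ∘ r k) :=
    fun k => meas_comp_countable ((hrmono k).measurable) (hrrange k) f
  have htend : ∀ x, Tendsto (fun k => (f ∘ r k) x) atTop (nhds (f x)) := by
    intro x
    have h1 : ∀ k, x ≤ r k x := by
      intro k
      rw [hr]
      rw [le_div_iff₀ (hpow k)]
      exact Int.le_ceil _
    have h2 : ∀ k, r k x ≤ x + (2 ^ k)⁻¹ := by
      intro k
      rw [hr]
      rw [div_le_iff₀ (hpow k)]
      have := (Int.ceil_lt_add_one (x * 2 ^ k)).le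
      have h2k : (x + (2 ^ k)⁻¹) * 2 ^ k = x * 2 ^ k + 1 := by
        field_simp
      linarith
    have hlim : Tendsto (fun k => r k x) atTop (nhds x) := by
      have : Tendsto (fun k : ℕ => x + (2 ^ k)⁻¹) atTop (nhds (x + 0)) := by
        exact tendsto_const_nhds.add (tendsto_inv_atTop_zero.comp (tendsto_pow_atTop_atTop_of_one_lt (by norm_num : (1:ℝ) < 2)))
      rw [add_zero] at this
      exact tendsto_of_tendsto_of_tendsto_of_le_of_le tendsto_const_nhds this h1 h2
    have hlim' : Tendsto (fun k => r k x) atTop (nhdsWithin x (Set.Ici x)) :=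
      tendsto_nhdsWithin_of_tendsto_nhds_of_eventually_within _ hlim
        (Eventually.of_forall fun k => h1 k)
    exact (hf x).tendsto.comp hlim'
  exact measurable_of_tendsto_metrizable hmeas (tendsto_pi_nhds.mpr htend)

/-- Oscillation-partition property up to `s`. -/
def CadPart (f : ℝ → ℝ) (ε s : ℝ) : Prop :=
  ∃ (m : ℕ) (t : ℕ → ℝ), t 0 = 0 ∧ t m = s ∧ (∀ i, i < m → t i ≤ t (i + 1)) ∧
    (∀ i, i < m → ∀ x ∈ Set.Ico (t i) (t (i + 1)), ∀ y ∈ Set.Ico (t i) (t (i + 1)),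
      |f x - f y| ≤ ε)

lemma cadPart_extend {f : ℝ → ℝ} {ε s s' : ℝ} (hs : CadPart f ε s) (hss' : s ≤ s')
    (hosc : ∀ x ∈ Set.Ico s s', ∀ y ∈ Set.Ico s s', |f x - f y| ≤ ε) :
    CadPart f ε s' := by
  obtain ⟨m, t, ht0, htm, hmono, hcell⟩ := hs
  set t' : ℕ → ℝ := fun i => if i ≤ m then t i else s' with ht'def
  have ht' : ∀ i, i ≤ m → t' i = t i := fun i hi => if_pos hi
  have ht'' : ∀ i, ¬ i ≤ m → t' i = s' := fun i hi => if_neg hi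
  refine ⟨m + 1, t', by rw [ht' 0 (Nat.zero_le m), ht0], by rw [ht'' (m+1) (by omega)], ?_, ?_⟩
  · intro i hi
    rcases lt_or_eq_of_le (Nat.lt_succ_iff.mp hi) with h | h
    · rw [ht' i h.le, ht' (i+1) (Nat.succ_le_of_lt h)]
      exact hmono i h
    · subst h
      rw [ht' i le_rfl, ht'' (i+1) (by omega), htm]
      exact hss'
  · intro i hi x hx y hy
    rcases lt_or_eq_of_le (Nat.lt_succ_iff.mp hi) with h | h
    · rw [ht' i h.le, ht' (i+1) (Nat.succ_le_of_lt h)] at hx hy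
      exact hcell i h x hx y hy
    · subst h
      rw [ht' i le_rfl, ht'' (i+1) (by omega), htm] at hx hy
      exact hosc x hx y hy

lemma cadlag_partition {f : ℝ → ℝ}
    (hr : ∀ t : ℝ, 0 ≤ t → ContinuousWithinAt f (Set.Ici t) t)
    (hl : ∀ t : ℝ, 0 < t → ∃ l : ℝ, Filter.Tendsto f (nhdsWithin t (Set.Iio t)) (nhds l))
    {T ε : ℝ} (hT : 0 < T) (hε : 0 < ε) : CadPart f ε T := by
  set S : Set ℝ := {s | 0 ≤ s ∧ s ≤ T ∧ CadPart f ε s} with hS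
  have h0S : (0:ℝ) ∈ S := ⟨le_rfl, hT.le, 0, fun _ => 0, rfl, rfl, by omega, by omega⟩
  have hne : S.Nonempty := ⟨0, h0S⟩
  have hbdd : BddAbove S := ⟨T, fun x hx => hx.2.1⟩
  set c := sSup S with hc
  have hc0 : 0 ≤ c := le_csSup hbdd h0S
  have hcT : c ≤ T := csSup_le hne (fun x hx => hx.2.1)
  -- c ∈ S
  have hcS : c ∈ S := by
    rcases eq_or_lt_of_le hc0 with h | h
    · rw [← h]; exact h0S
    · obtain ⟨l, hl'⟩ := hl c h
      have hev : ∀ᶠ x in nhdsWithin c (Set.Iio c), |f x - l| ≤ ε / 2 := by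
        have : Set.Icc (l - ε/2) (l + ε/2) ∈ nhds l := by
          apply Icc_mem_nhds <;> linarith
        filter_upwards [hl' this] with x hx
        simp only [Set.mem_preimage, Set.mem_Icc] at hx
        rw [abs_sub_le_iff]
        exact ⟨by linarith [hx.2], by linarith [hx.1]⟩
      rw [eventually_iff, mem_nhdsLT_iff_exists_Ioo_subset] at hev
      obtain ⟨u, hu, hsub⟩ := hev
      have hmax : max u 0 < c := max_lt hu h
      obtain ⟨s, hsS, hs⟩ := exists_lt_of_lt_csSup hne hmax
      have hsc : s ≤ c := le_csSup hbdd hsS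
      refine ⟨hc0, hcT, cadPart_extend hsS.2.2 hsc ?_⟩
      intro x hx y hy
      have hx' : x ∈ Set.Ioo u c := ⟨lt_of_le_of_lt (le_max_left u 0) hs |>.trans_le hx.1, hx.2⟩
      have hy' : y ∈ Set.Ioo u c := ⟨lt_of_le_of_lt (le_max_left u 0) hs |>.trans_le hy.1, hy.2⟩
      have h1 : |f x - l| ≤ ε / 2 := hsub hx'
      have h2 : |f y - l| ≤ ε / 2 := hsub hy'
      calc |f x - f y| ≤ |f x - l| + |l - f y| := abs_sub_le _ _ _
        _ = |f x - l| + |f y - l| := by rw [abs_sub_comm l]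
        _ ≤ ε := by linarith
  -- c = T
  rcases eq_or_lt_of_le hcT with h | h
  · rw [← h]; exact hcS.2.2
  · exfalso
    have hev : ∀ᶠ x in nhdsWithin c (Set.Ici c), |f x - f c| ≤ ε / 2 := by
      have : Set.Icc (f c - ε/2) (f c + ε/2) ∈ nhds (f c) := by
        apply Icc_mem_nhds <;> linarith
      filter_upwards [(hr c hc0).tendsto this] with x hx
      simp only [Set.mem_preimage, Set.mem_Icc] at hx
      rw [abs_sub_le_iff]
      exact ⟨by linarith [hx.2], by linarith [hx.1]⟩
    rw [eventually_iff, mem_nhdsGE_iff_exists_Ico_subset] at hev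
    obtain ⟨u, hu, hsub⟩ := hev
    set d := min u T with hd
    have hcd : c < d := lt_min hu h
    have hdS : d ∈ S := by
      refine ⟨hc0.trans hcd.le, min_le_right u T, cadPart_extend hcS.2.2 hcd.le ?_⟩
      intro x hx y hy
      have h1 : |f x - f c| ≤ ε / 2 := hsub ⟨hx.1, lt_of_lt_of_le hx.2 (min_le_left u T)⟩
      have h2 : |f y - f c| ≤ ε / 2 := hsub ⟨hy.1, lt_of_lt_of_le hy.2 (min_le_left u T)⟩
      calc |f x - f y| ≤ |f x - f c| + |f c - f y| := abs_sub_le _ _ _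
        _ = |f x - f c| + |f y - f c| := by rw [abs_sub_comm (f c)]
        _ ≤ ε := by linarith
    exact absurd (le_csSup hbdd hdS) (not_le.mpr hcd)



lemma exists_cell {m : ℕ} {t : ℕ → ℝ} {T : ℝ}
    (hmono : ∀ i, i < m → t i ≤ t (i + 1)) (ht0 : t 0 = 0) (htm : t m = T)
    {x : ℝ} (hx : 0 ≤ x) (hxT : x < T) :
    ∃ i, i < m ∧ t i ≤ x ∧ x < t (i + 1) := by
  classical
  set p : ℕ → Prop := fun i => t i ≤ x with hp
  have hp0 : p 0 := by rw [hp]; simp [ht0, hx]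
  set j := Nat.findGreatest p m with hj
  have hjp : p j := Nat.findGreatest_spec (Nat.zero_le m) hp0
  have hjle : j ≤ m := Nat.findGreatest_le m
  have hjm : j < m := by
    rcases lt_or_eq_of_le hjle with h | h
    · exact h
    · exfalso; rw [h] at hjp; rw [hp] at hjp; simp only [htm] at hjp; linarith
  refine ⟨j, hjm, hjp, ?_⟩
  by_contra hcon
  push_neg at hcon
  exact Nat.findGreatest_is_greatest (Nat.lt_succ_self j) (Nat.succ_le_of_lt hjm) hcon

lemma cadPart_bound {f : ℝ → ℝ} {ε T : ℝ} (hε : 0 ≤ ε) (h : CadPart f ε T) :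
    ∃ M : ℝ, 0 ≤ M ∧ ∀ x, 0 ≤ x → x ≤ T → |f x| ≤ M := by
  obtain ⟨m, t, ht0, htm, hmono, hcell⟩ := h
  set M0 : ℝ := (Finset.range (m + 1)).sup' (by simp) (fun i => |f (t i)|) with hM0
  have hM0nn : 0 ≤ M0 := by
    have h1 : |f (t 0)| ≤ M0 := Finset.le_sup' (fun i => |f (t i)|) (Finset.mem_range.mpr (Nat.succ_pos m))
    have h2 := abs_nonneg (f (t 0))
    linarith
  refine ⟨ε + M0, by linarith, ?_⟩
  · intro x hx0 hxT
    rcases eq_or_lt_of_le hxT with h | h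
    · subst h
      have : |f (t m)| ≤ M0 := Finset.le_sup' (fun i => |f (t i)|) (Finset.mem_range.mpr (Nat.lt_succ_self m))
      rw [htm] at this
      have := abs_nonneg (f x); linarith
    · obtain ⟨i, him, hix, hix'⟩ := exists_cell hmono ht0 htm hx0 h
      have hcell' := hcell i him x ⟨hix, hix'⟩ (t i) ⟨le_rfl, lt_of_le_of_lt hix hix'⟩
      have hMi : |f (t i)| ≤ M0 := Finset.le_sup' (fun i => |f (t i)|) (Finset.mem_range.mpr (by omega))
      calc |f x| = |(f x - f (t i)) + f (t i)| := by ring_nf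
        _ ≤ |f x - f (t i)| + |f (t i)| := abs_add_le _ _
        _ ≤ ε + M0 := add_le_add hcell' hMi

lemma measurable_clamp_of_rightCont {f : ℝ → ℝ}
    (hr : ∀ t : ℝ, 0 ≤ t → ContinuousWithinAt f (Set.Ici t) t) :
    ∀ t : ℝ, ContinuousWithinAt (fun x => f (max 0 x)) (Set.Ici t) t := by
  intro t
  rcases le_or_gt 0 t with ht | ht
  · refine (hr t ht).congr (fun y hy => ?_) (by rw [max_eq_right ht])
    rw [max_eq_right (ht.trans hy)]
  · have hev : (fun x => f (max 0 x)) =ᶠ[nhds t] (fun _ => f 0) := by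
      filter_upwards [Iio_mem_nhds ht] with y hy
      rw [max_eq_left (le_of_lt hy)]
    have : ContinuousAt (fun x => f (max 0 x)) t :=
      ContinuousAt.congr continuousAt_const hev.symm
    exact this.continuousWithinAt

lemma integrableOn_of_bdd {g : ℝ → ℝ} {s : Set ℝ} {M : ℝ}
    (hg : Measurable g) (hs : MeasurableSet s) (hvol : volume s < ⊤)
    (hM : ∀ x ∈ s, |g x| ≤ M) : IntegrableOn g s := by
  haveI : IsFiniteMeasure (volume.restrict s) :=
    ⟨by rwa [Measure.restrict_apply_univ]⟩
  refine Integrable.mono' (integrable_const M) hg.aestronglyMeasurable ?_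
  rw [ae_restrict_iff' hs]
  exact Eventually.of_forall (fun x hx => by rw [Real.norm_eq_abs]; exact hM x hx)



lemma cadlag_approx {g : ℝ → ℝ}
    (hr : ∀ t : ℝ, 0 ≤ t → ContinuousWithinAt g (Set.Ici t) t)
    (hl : ∀ t : ℝ, 0 < t → ∃ l : ℝ, Filter.Tendsto g (nhdsWithin t (Set.Iio t)) (nhds l))
    {T ε M : ℝ} (hT : 0 < T) (hε : 0 < ε)
    (hM0 : 0 ≤ M) (hM : ∀ x, 0 ≤ x → x ≤ T → |g x| ≤ M) :
    ∃ (m : ℕ) (t : ℕ → ℝ),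
      ∀ δ : ℝ, 0 < δ → ∃ φ : ℝ → ℝ, Continuous φ ∧ (∀ x, |φ x| ≤ M) ∧
        (∀ x y, |φ x - φ y| ≤ δ⁻¹ * (2 * M) * |x - y|) ∧
        (∀ x, 0 ≤ x → x ≤ T → (∀ i, i < m → δ < |x - t (i + 1)|) → |φ x - g x| ≤ ε) := by
  obtain ⟨m, t, ht0, htm, hmono, hcell⟩ := cadlag_partition hr hl hT hε
  have htmono : ∀ i j, i ≤ j → j ≤ m → t i ≤ t j := by
    intro i j hij hjm
    induction j with
    | zero =>
        have : i = 0 := by omega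
        rw [this]
    | succ k ih =>
      rcases Nat.lt_or_ge i (k+1) with h | h
      · exact le_trans (ih (by omega) (by omega)) (hmono k (by omega))
      · have : i = k + 1 := by omega
        rw [this]
  have htnn : ∀ i, i ≤ m → 0 ≤ t i := fun i hi => ht0 ▸ htmono 0 i (Nat.zero_le i) hi
  have htT : ∀ i, i ≤ m → t i ≤ T := fun i hi => htm ▸ htmono i m hi le_rfl
  refine ⟨m, t, ?_⟩
  intro δ hδ
  set gm : ℝ → ℝ := fun x => g (max 0 (min x T)) with hgm
  have hgm_meas : Measurable gm := by
    have h1 : Measurable (fun x => g (max 0 x)) :=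
      measurable_of_rightCont (measurable_clamp_of_rightCont hr)
    exact h1.comp (measurable_id.min measurable_const)
  have hgm_bd : ∀ x, |gm x| ≤ M := by
    intro x
    refine hM _ (le_max_left _ _) (max_le hT.le (min_le_right x T))
  have hgm_eq : ∀ y, 0 ≤ y → y ≤ T → gm y = g y := by
    intro y h1 h2
    rw [hgm]; simp only [min_eq_left h2, max_eq_right h1]
  have Ig : ∀ u v : ℝ, IntervalIntegrable gm volume u v := by
    intro u v
    constructor <;>
      exact integrableOn_of_bdd hgm_meas measurableSet_Ioc measure_Ioc_lt_top
        (fun x _ => hgm_bd x)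
  set H : ℝ → ℝ := fun u => ∫ y in (0:ℝ)..u, gm y with hH
  have hHadj : ∀ u v : ℝ, H v - H u = ∫ y in u..v, gm y := by
    intro u v
    have := intervalIntegral.integral_add_adjacent_intervals (Ig 0 u) (Ig u v)
    rw [hH]; dsimp only; linarith
  have hHdiff : ∀ u v : ℝ, |H v - H u| ≤ M * |v - u| := by
    intro u v
    rw [hHadj u v]
    have := intervalIntegral.norm_integral_le_of_norm_le_const
      (f := gm) (a := u) (b := v) (C := M)
      (fun x _ => by rw [Real.norm_eq_abs]; exact hgm_bd x)
    rwa [Real.norm_eq_abs] at this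
  set φ : ℝ → ℝ := fun x => δ⁻¹ * (H (x + δ) - H x) with hφ
  have hLip : ∀ x y, |φ x - φ y| ≤ δ⁻¹ * (2 * M) * |x - y| := by
    intro x y
    have h1 : |H (x + δ) - H (y + δ)| ≤ M * |x - y| := by
      have := hHdiff (y + δ) (x + δ)
      simpa [add_sub_add_right_eq_sub] using this
    have h2 : |H x - H y| ≤ M * |x - y| := by
      have := hHdiff y x; rwa [] at this
    have h3 : φ x - φ y = δ⁻¹ * ((H (x + δ) - H (y + δ)) - (H x - H y)) := by
      rw [hφ]; ring
    rw [h3, abs_mul, abs_of_nonneg (by positivity : (0:ℝ) ≤ δ⁻¹)]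
    have h4 : |(H (x + δ) - H (y + δ)) - (H x - H y)| ≤ M * |x - y| + M * |x - y| :=
      le_trans (abs_sub _ _) (add_le_add h1 h2)
    calc δ⁻¹ * |(H (x + δ) - H (y + δ)) - (H x - H y)|
        ≤ δ⁻¹ * (M * |x - y| + M * |x - y|) := by
          apply mul_le_mul_of_nonneg_left h4 (by positivity)
      _ = δ⁻¹ * (2 * M) * |x - y| := by ring
  have hφcont : Continuous φ := by
    apply LipschitzWith.continuous (K := (δ⁻¹ * (2 * M)).toNNReal)
    apply LipschitzWith.of_dist_le_mul
    intro x y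
    rw [Real.dist_eq, Real.dist_eq, Real.coe_toNNReal _ (by positivity)]
    exact hLip x y
  have hφbd : ∀ x, |φ x| ≤ M := by
    intro x
    rw [hφ]; dsimp only
    rw [abs_mul, abs_of_nonneg (by positivity : (0:ℝ) ≤ δ⁻¹)]
    have := hHdiff x (x + δ)
    calc δ⁻¹ * |H (x + δ) - H x| ≤ δ⁻¹ * (M * |x + δ - x|) :=
          mul_le_mul_of_nonneg_left this (by positivity)
      _ = δ⁻¹ * (M * δ) := by rw [show x + δ - x = δ by ring, abs_of_pos hδ]
      _ = M := by field_simp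
  refine ⟨φ, hφcont, hφbd, hLip, ?_⟩
  intro x hx0 hxT hgood
  have hm1 : 0 < m := by
    rcases Nat.eq_zero_or_pos m with h | h
    · exfalso; rw [h] at htm; rw [ht0] at htm; linarith
    · exact h
  have hxT' : x + δ < T := by
    have := hgood (m - 1) (by omega)
    rw [show m - 1 + 1 = m by omega, htm] at this
    rcases abs_cases (x - T) with ⟨h1, _⟩ | ⟨h1, _⟩
    · linarith
    · linarith
  obtain ⟨i, him, hix, hix'⟩ := exists_cell hmono ht0 htm hx0 (by linarith)
  have hxd : x + δ < t (i + 1) := by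
    have := hgood i him
    rcases abs_cases (x - t (i + 1)) with ⟨h1, _⟩ | ⟨h1, _⟩
    · linarith
    · linarith
  have hkey : φ x - g x = δ⁻¹ * ∫ y in x..(x + δ), (gm y - g x) := by
    rw [hφ]; dsimp only
    rw [hHadj x (x + δ)]
    rw [intervalIntegral.integral_sub (Ig x (x + δ)) intervalIntegrable_const]
    rw [intervalIntegral.integral_const, smul_eq_mul]
    rw [show x + δ - x = δ by ring]
    field_simp
  rw [hkey]
  rw [abs_mul, abs_of_nonneg (by positivity : (0:ℝ) ≤ δ⁻¹)]
  have hbd : ∀ y ∈ Set.uIoc x (x + δ), ‖gm y - g x‖ ≤ ε := by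
    intro y hy
    rw [Set.uIoc_of_le (by linarith : x ≤ x + δ)] at hy
    have hy1 : t i ≤ y := le_trans hix hy.1.le
    have hy2 : y < t (i + 1) := lt_of_le_of_lt hy.2 hxd
    have h0y : 0 ≤ y := le_trans (htnn i him.le) hy1
    have hyT : y ≤ T := by
      have := htT (i + 1) him
      linarith [hy2]
    rw [Real.norm_eq_abs, hgm_eq y h0y hyT]
    exact hcell i him y ⟨hy1, hy2⟩ x ⟨hix, hix'⟩
  have := intervalIntegral.norm_integral_le_of_norm_le_const hbd
  rw [Real.norm_eq_abs, show x + δ - x = δ by ring, abs_of_pos hδ] at this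
  calc δ⁻¹ * |∫ y in x..(x + δ), (gm y - g x)| ≤ δ⁻¹ * (ε * δ) :=
        mul_le_mul_of_nonneg_left this (by positivity)
    _ = ε := by field_simp

lemma pushforward_eq {aa bb : ℝ} (haa : 0 ≤ aa)
    {F G D : ℝ → ℝ}
    (hFmeas : Measurable F)
    (hFmono : StrictMonoOn F (Set.Icc 0 aa))
    (hFbij : Set.BijOn F (Set.Icc 0 aa) (Set.Icc 0 bb))
    (hInv : Set.InvOn G F (Set.Icc 0 aa) (Set.Icc 0 bb))
    (hD : Measurable D) {MD : ℝ} (hDbd : ∀ x, |D x| ≤ MD)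
    (hDnn : ∀ x ∈ Set.Icc 0 aa, 0 ≤ D x)
    (hFTC : ∀ v ∈ Set.Icc 0 aa, ∫ y in Set.Icc 0 v, D y = F v)
    (φ : ℝ → ℝ) (hφ : Measurable φ) :
    ∫ x in Set.Icc 0 bb, φ x = ∫ y in Set.Icc 0 aa, φ (F y) * D y := by
  have hbb0 : 0 ≤ bb := by
    have := hFbij.mapsTo ⟨le_rfl, haa⟩
    exact le_trans this.1 this.2 |> fun _ => (Set.nonempty_Icc.mp ⟨F 0, this⟩)
  have hFaa : F aa = bb := by
    have h1 : F aa ∈ Set.Icc 0 bb := hFbij.mapsTo ⟨haa, le_rfl⟩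
    obtain ⟨y, hy, hFy⟩ := hFbij.surjOn ⟨le_rfl.trans hbb0, le_rfl⟩
    have : F y ≤ F aa := hFmono.monotoneOn hy ⟨haa, le_rfl⟩ hy.2
    rw [hFy] at this
    linarith [h1.2]
  set ρ : Measure ℝ :=
    (volume.restrict (Set.Icc 0 aa)).withDensity (fun y => ENNReal.ofReal (D y)) with hρ
  have hρ_apply : ∀ A : Set ℝ, MeasurableSet A →
      ρ A = ∫⁻ y in A ∩ Set.Icc 0 aa, ENNReal.ofReal (D y) := by
    intro A hA
    rw [hρ, withDensity_apply _ hA, Measure.restrict_restrict hA]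
  have hρIcc : ∀ s : ℝ, 0 ≤ s → s ≤ aa → ρ (Set.Icc 0 s) = ENNReal.ofReal (F s) := by
    intro s hs0 hsa
    rw [hρ_apply _ measurableSet_Icc, Set.inter_eq_left.mpr
      (Set.Icc_subset_Icc le_rfl hsa)]
    rw [← ofReal_integral_eq_lintegral_ofReal
      (integrableOn_of_bdd hD measurableSet_Icc measure_Icc_lt_top (fun x _ => hDbd x))
      ((ae_restrict_iff' measurableSet_Icc).mpr (Eventually.of_forall
        (fun x hx => hDnn x ⟨hx.1, hx.2.trans hsa⟩)))]
    rw [hFTC s ⟨hs0, hsa⟩]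
  have hρfin : IsFiniteMeasure ρ := by
    constructor
    rw [hρ, withDensity_apply _ MeasurableSet.univ, Measure.restrict_restrict MeasurableSet.univ,
      Set.univ_inter]
    calc ∫⁻ y in Set.Icc 0 aa, ENNReal.ofReal (D y)
        ≤ ∫⁻ _ in Set.Icc 0 aa, ENNReal.ofReal MD :=
          lintegral_mono (fun y => ENNReal.ofReal_le_ofReal ((le_abs_self _).trans (hDbd y)))
      _ = ENNReal.ofReal MD * volume (Set.Icc 0 aa) := by
          rw [lintegral_const, Measure.restrict_apply_univ]
      _ < ⊤ := ENNReal.mul_lt_top ENNReal.ofReal_lt_top measure_Icc_lt_top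
  haveI := hρfin
  haveI : IsFiniteMeasure (Measure.map F ρ) := by
    constructor
    rw [Measure.map_apply hFmeas MeasurableSet.univ]
    exact measure_lt_top ρ _
  have hmap : Measure.map F ρ = volume.restrict (Set.Icc 0 bb) := by
    apply MeasureTheory.Measure.ext_of_Iic
    intro s
    rw [Measure.map_apply hFmeas measurableSet_Iic,
      hρ_apply _ (hFmeas measurableSet_Iic),
      Measure.restrict_apply measurableSet_Iic]
    rcases lt_or_ge s 0 with hs | hs
    · have h1 : F ⁻¹' Set.Iic s ∩ Set.Icc 0 aa = ∅ := by
        ext y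
        simp only [Set.mem_inter_iff, Set.mem_preimage, Set.mem_Iic, Set.mem_Icc,
          Set.mem_empty_iff_false, iff_false]
        rintro ⟨h1, h2, h3⟩
        have : F y ∈ Set.Icc 0 bb := hFbij.mapsTo ⟨h2, h3⟩
        linarith [this.1]
      have h2 : Set.Iic s ∩ Set.Icc 0 bb = ∅ := by
        ext x
        simp only [Set.mem_inter_iff, Set.mem_Iic, Set.mem_Icc,
          Set.mem_empty_iff_false, iff_false]
        rintro ⟨h1, h2, h3⟩
        linarith
      rw [h1, h2]
      simp
    · set u := min s bb with hu
      have hu0 : 0 ≤ u := le_min hs hbb0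
      have hub : u ∈ Set.Icc 0 bb := ⟨hu0, min_le_right _ _⟩
      obtain ⟨w0, hw0, hFw0⟩ := hFbij.surjOn hub
      set w := w0 with hwdef
      have hw : w ∈ Set.Icc 0 aa := hw0
      have hFw : F w = u := hFw0
      have hset : F ⁻¹' Set.Iic s ∩ Set.Icc 0 aa = Set.Icc 0 w := by
        ext y
        simp only [Set.mem_inter_iff, Set.mem_preimage, Set.mem_Iic, Set.mem_Icc]
        constructor
        · rintro ⟨h1, h2, h3⟩
          refine ⟨h2, ?_⟩
          have hFy : F y ∈ Set.Icc 0 bb := hFbij.mapsTo ⟨h2, h3⟩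
          have : F y ≤ F w := by rw [hFw]; exact le_min h1 hFy.2
          exact (hFmono.le_iff_le ⟨h2, h3⟩ hw).mp this
        · rintro ⟨h1, h2⟩
          have hy : y ∈ Set.Icc 0 aa := ⟨h1, h2.trans hw.2⟩
          have : F y ≤ F w := hFmono.monotoneOn hy hw h2
          rw [hFw] at this
          exact ⟨this.trans (min_le_left _ _), hy.1, hy.2⟩
      have h2 : Set.Iic s ∩ Set.Icc 0 bb = Set.Icc 0 u := by
        ext x
        simp only [Set.mem_inter_iff, Set.mem_Iic, Set.mem_Icc, hu, le_min_iff]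
        tauto
      rw [hset, h2]
      have := hρIcc w hw.1 hw.2
      rw [hρ_apply _ measurableSet_Icc, Set.inter_eq_left.mpr
        (Set.Icc_subset_Icc le_rfl hw.2)] at this
      rw [this, hFw, Real.volume_Icc, sub_zero]
  calc ∫ x in Set.Icc 0 bb, φ x = ∫ x, φ x ∂(Measure.map F ρ) := by rw [hmap]
    _ = ∫ y, φ (F y) ∂ρ :=
        integral_map hFmeas.aemeasurable hφ.aestronglyMeasurable
    _ = ∫ y, (Real.toNNReal (D y)) • φ (F y) ∂(volume.restrict (Set.Icc 0 aa)) := by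
        rw [hρ]
        exact integral_withDensity_eq_integral_smul
          (measurable_real_toNNReal.comp hD) _
    _ = ∫ y in Set.Icc 0 aa, φ (F y) * D y := by
        refine integral_congr_ae ((ae_restrict_iff' measurableSet_Icc).mpr
          (Eventually.of_forall (fun y hy => ?_)))
        show (D y).toNNReal • φ (F y) = φ (F y) * D y
        rw [NNReal.smul_def, Real.coe_toNNReal _ (hDnn y hy), smul_eq_mul, mul_comm]

lemma norm_setIntegral_le_of_bdd {ψ : ℝ → ℝ} {K : ℝ} {s : Set ℝ}
    (hs : volume s < ⊤) (hsm : MeasurableSet s) (hK : ∀ x ∈ s, |ψ x| ≤ K) :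
    |∫ x in s, ψ x| ≤ K * (volume s).toReal := by
  have := norm_setIntegral_le_of_norm_le_const_ae (μ := volume) (s := s) (f := ψ) (C := K) hs
    ((ae_restrict_iff' hsm).mpr (Eventually.of_forall (fun x hx => by
        rw [Real.norm_eq_abs]; exact hK x hx)))
  rwa [Real.norm_eq_abs] at this

lemma integral_Icc_sub_Icc {ψ : ℝ → ℝ} {K u v : ℝ}
    (hψm : Measurable ψ) (hK : ∀ x, |ψ x| ≤ K) (hu : 0 ≤ u) (huv : u ≤ v) :
    |(∫ x in Set.Icc 0 v, ψ x) - ∫ x in Set.Icc 0 u, ψ x| ≤ K * (v - u) := by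
  have hsplit : ∫ x in Set.Icc 0 v, ψ x =
      (∫ x in Set.Icc 0 u, ψ x) + ∫ x in Set.Ioc u v, ψ x := by
    rw [← setIntegral_union ((Set.Iic_disjoint_Ioc le_rfl).mono Set.Icc_subset_Iic_self le_rfl) measurableSet_Ioc
      (integrableOn_of_bdd hψm measurableSet_Icc measure_Icc_lt_top (fun x _ => hK x))
      (integrableOn_of_bdd hψm measurableSet_Ioc measure_Ioc_lt_top (fun x _ => hK x))]
    rw [Set.Icc_union_Ioc_eq_Icc hu huv]
  rw [hsplit, add_sub_cancel_left]
  have := norm_setIntegral_le_of_bdd (s := Set.Ioc u v) measure_Ioc_lt_top measurableSet_Ioc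
    (fun x _ => hK x)
  rwa [Real.volume_Ioc, ENNReal.toReal_ofReal (by linarith)] at this


lemma hasDerivWithinAt_nonneg_of_mono {F : ℝ → ℝ} {d y : ℝ}
    (hd : HasDerivWithinAt F d (Set.Ici y) y)
    (hmono : ∀ z, y ≤ z → F y ≤ F z) : 0 ≤ d := by
  rw [hasDerivWithinAt_iff_tendsto_slope] at hd
  rw [Set.Ici_sdiff_left] at hd
  refine ge_of_tendsto hd ?_
  filter_upwards [self_mem_nhdsWithin] with z hz
  have hz' : y < z := hz
  rw [slope_def_field]
  have h1 : F y ≤ F z := hmono z hz'.le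
  have : (0:ℝ) ≤ (F z - F y) / (z - y) := div_nonneg (by linarith) (by linarith)
  simpa [div_eq_iff] using this

lemma integral_Icc_close {ψ : ℝ → ℝ} {K u v : ℝ}
    (hψm : Measurable ψ) (hK : ∀ x, |ψ x| ≤ K) (hu : 0 ≤ u) (hv : 0 ≤ v) :
    |(∫ x in Set.Icc 0 v, ψ x) - ∫ x in Set.Icc 0 u, ψ x| ≤ K * |v - u| := by
  rcases le_total u v with h | h
  · have := integral_Icc_sub_Icc hψm hK hu h
    rwa [abs_of_nonneg (by linarith : (0:ℝ) ≤ v - u)]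
  · have := integral_Icc_sub_Icc hψm hK hv h
    rw [abs_sub_comm] at this
    rwa [abs_of_nonpos (by linarith : v - u ≤ 0), neg_sub]

set_option maxHeartbeats 2000000 in
/-- time-changed mixing lemma. -/
theorem time_changed_indicator_measures_weak_convergence
    (aseq bseq : ℕ → ℝ) (a b : ℝ) (ha : 0 < a) (hb : 0 < b)
    (haseq : Filter.Tendsto aseq atTop (nhds a))
    (hbseq : Filter.Tendsto bseq atTop (nhds b))
    -- fₙ : càdlàg, {0,1}-valued, vanishing on (aₙ, ∞)
    (f : ℕ → ℝ → ℝ)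
    (hf_cadlag : ∀ n, Cadlag (f n))
    (hf_vals : ∀ n x, f n x = 0 ∨ f n x = 1)
    (hf_vanish : ∀ n x, aseq n < x → f n x = 0)
    -- Fₙ : continuous increasing bijection from [0,aₙ] onto [0,bₙ],
    -- equal to bₙ after aₙ, with càdlàg right derivative Fₙ' everywhere
    (F : ℕ → ℝ → ℝ) (F' : ℕ → ℝ → ℝ)
    (hF_cont : ∀ n, ContinuousOn (F n) (Set.Icc 0 (aseq n)))
    (hF_mono : ∀ n, StrictMonoOn (F n) (Set.Icc 0 (aseq n)))
    (hF_bij : ∀ n, Set.BijOn (F n) (Set.Icc 0 (aseq n)) (Set.Icc 0 (bseq n)))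
    (hF_ext : ∀ n x, aseq n < x → F n x = bseq n)
    (hF_deriv : ∀ n x, 0 ≤ x → HasDerivWithinAt (F n) (F' n x) (Set.Ici x) x)
    (hF'_cadlag : ∀ n, Cadlag (F' n))
    -- Gₙ : the inverse bijection of Fₙ
    (G : ℕ → ℝ → ℝ)
    (hG : ∀ n, Set.InvOn (G n) (F n) (Set.Icc 0 (aseq n)) (Set.Icc 0 (bseq n)))
    -- (1) Fₙ → F uniformly, F continuous with càdlàg right derivative F'
    (Flim : ℝ → ℝ) (Flim' : ℝ → ℝ)
    (hFlim_cont : ContinuousOn Flim (Set.Ici 0))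
    (hFlim_deriv : ∀ x : ℝ, 0 ≤ x → HasDerivWithinAt Flim (Flim' x) (Set.Ici x) x)
    (hFlim'_cadlag : Cadlag Flim')
    (hFconv : TendstoUniformlyOn (fun n x => F n x) Flim atTop (Set.Ici 0))
    -- (2) Fₙ' → F' in the Skorokhod sense
    (hF'conv : SkorokhodTendsto F' Flim')
    -- (3) 1_{x ≤ aₙ} 1_{fₙ(x)=1} dx → lam·1_{x ≤ a} dx weakly
    (lam : ℝ) (hlam : 0 ≤ lam)
    (hweak : ∀ h : ℝ → ℝ, Continuous h → (∃ C : ℝ, ∀ x, |h x| ≤ C) →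
      Filter.Tendsto
        (fun n => ∫ x in {x : ℝ | 0 ≤ x ∧ x ≤ aseq n ∧ f n x = 1}, h x) atTop
        (nhds (lam * ∫ x in Set.Icc (0:ℝ) a, h x))) :
    -- conclusion: 1_{x ≤ bₙ} 1_{fₙ(Fₙ⁻¹(x))=1} dx → lam·1_{x ≤ b} dx weakly
    ∀ h : ℝ → ℝ, Continuous h → (∃ C : ℝ, ∀ x, |h x| ≤ C) →
      Filter.Tendsto
        (fun n => ∫ x in {x : ℝ | 0 ≤ x ∧ x ≤ bseq n ∧ f n (G n x) = 1}, h x) atTop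
        (nhds (lam * ∫ x in Set.Icc (0:ℝ) b, h x)) := by
  intro h hcont hCbd
  obtain ⟨C, hC⟩ := hCbd
  have hC0 : 0 ≤ C := le_trans (abs_nonneg _) (hC 0)
  obtain ⟨lmb, hlmb_prop, hlmb_id, hlmb_conv⟩ := hF'conv
  set A : ℝ := a + 1 with hA
  have hA0 : 0 < A := by linarith
  have hA1 : 0 < A + 1 := by linarith
  obtain ⟨M, hM0, hMbd⟩ := cadPart_bound zero_le_one
    (cadlag_partition hFlim'_cadlag.1 hFlim'_cadlag.2 hA1 one_pos)
  rw [Metric.tendsto_nhds]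
  intro ε' hε'
  -- constants
  set K1 : ℝ := (1 + lam) * (3 * C + M) * A + 1 + lam * (C * M + C) with hK1def
  have hK1pos : 0 < K1 + 1 := by
    have t1 : 0 ≤ (1 + lam) * (3 * C + M) * A :=
      mul_nonneg (mul_nonneg (by linarith) (by linarith)) hA0.le
    have t2 : 0 ≤ lam * (C * M + C) :=
      mul_nonneg hlam (add_nonneg (mul_nonneg hC0 hM0) hC0)
    rw [hK1def]; linarith
  set ε₀ : ℝ := min 1 (ε' / (4 * (K1 + 1))) with hε₀def
  have hε₀pos : 0 < ε₀ := lt_min one_pos (by positivity)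
  have hε₀1 : ε₀ ≤ 1 := min_le_left _ _
  obtain ⟨m, tc, happrox⟩ :=
    cadlag_approx hFlim'_cadlag.1 hFlim'_cadlag.2 hA1 hε₀pos hM0 hMbd
  set K2 : ℝ := (1 + lam) * (4 * C * (2 * M + 1)) * (m + 1) + 1 with hK2def
  have hK2pos : 0 < K2 := by
    have t1 : 0 ≤ (1 + lam) * (4 * C * (2 * M + 1)) * ((m : ℝ) + 1) :=
      mul_nonneg (mul_nonneg (by linarith)
        (mul_nonneg (mul_nonneg (by norm_num) hC0) (by linarith))) (by positivity)
    rw [hK2def]; linarith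
  set δ : ℝ := min ε₀ (ε' / (4 * K2)) with hδdef
  have hδpos : 0 < δ := lt_min hε₀pos (by positivity)
  have hδε₀ : δ ≤ ε₀ := min_le_left _ _
  set ηb : ℝ := min δ (ε₀ * δ / (2 * M + 1)) with hηbdef
  have hηbpos : 0 < ηb := lt_min hδpos (by positivity)
  have hηbδ : ηb ≤ δ := min_le_left _ _
  have hηb1 : ηb ≤ 1 := le_trans hηbδ (hδε₀.trans hε₀1)
  obtain ⟨φ, hφcont, hφbd, hφlip, hφapp⟩ := happrox δ hδpos
  -- clamped Flim
  set Flc : ℝ → ℝ := fun x => Flim (max 0 x) with hFlcdef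
  have hFlc_cont : Continuous Flc :=
    hFlim_cont.comp_continuous (continuous_const.max continuous_id)
      (fun x => Set.mem_Ici.mpr (le_max_left _ _))
  -- bound for Flim on [0, A]
  obtain ⟨R, hR⟩ := (isCompact_Icc (a := (0:ℝ)) (b := A)).exists_bound_of_continuousOn
    (hFlim_cont.mono (fun x hx => hx.1))
  set R0 : ℝ := max R 0 with hR0def
  have hR0 : ∀ x ∈ Set.Icc (0:ℝ) A, |Flim x| ≤ R0 :=
    fun x hx => le_trans (by rw [← Real.norm_eq_abs]; exact hR x hx) (le_max_left _ _)
  -- uniform continuity of h on a compact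
  have hhuc := (isCompact_Icc (a := -(R0 + 1)) (b := R0 + 1)).uniformContinuousOn_of_continuous
    hcont.continuousOn
  rw [Metric.uniformContinuousOn_iff] at hhuc
  obtain ⟨dh, hdh0, hdh⟩ := hhuc ε₀ hε₀pos
  -- the comparison function Ψ
  set Ψ : ℝ → ℝ := fun x => h (Flc x) * φ x with hΨdef
  have hΨcont : Continuous Ψ := (hcont.comp hFlc_cont).mul hφcont
  have hΨbd : ∀ x, |Ψ x| ≤ C * M := by
    intro x
    rw [hΨdef]
    calc |h (Flc x) * φ x| = |h (Flc x)| * |φ x| := abs_mul _ _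
      _ ≤ C * M := mul_le_mul (hC _) (hφbd x) (abs_nonneg _) hC0
  have hweakΨ := hweak Ψ hΨcont ⟨C * M, hΨbd⟩
  rw [Metric.tendsto_nhds] at hweakΨ
  -- the bad set
  set Bad : Set ℝ := ⋃ i ∈ Finset.range m, Metric.closedBall (tc (i + 1)) (2 * δ) with hBaddef
  have hBadMeas : MeasurableSet Bad :=
    (Finset.range m).measurableSet_biUnion (fun i _ => measurableSet_closedBall)
  have hBadVol : volume Bad ≤ ENNReal.ofReal ((m : ℝ) * (4 * δ)) := by
    calc volume Bad ≤ ∑ i ∈ Finset.range m, volume (Metric.closedBall (tc (i + 1)) (2 * δ)) :=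
          measure_biUnion_finset_le _ _
      _ = ∑ _i ∈ Finset.range m, ENNReal.ofReal (2 * (2 * δ)) := by
          simp [Real.volume_closedBall]
      _ = (m : ℝ≥0∞) * ENNReal.ofReal (2 * (2 * δ)) := by
          rw [Finset.sum_const, Finset.card_range, nsmul_eq_mul]
      _ ≤ ENNReal.ofReal ((m : ℝ) * (4 * δ)) := by
          rw [show (2:ℝ) * (2 * δ) = 4 * δ by ring,
            ENNReal.ofReal_mul (by positivity : (0:ℝ) ≤ (m:ℝ)), ENNReal.ofReal_natCast]
  -- eventual facts
  have E1 : ∀ᶠ n in atTop, ∀ s ∈ Set.Icc (0:ℝ) (A + 1),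
      |F' n (lmb n s) - Flim' s| ≤ ε₀ := by
    have := (Metric.tendstoUniformlyOn_iff.mp (hlmb_conv (A + 1) hA1)) ε₀ hε₀pos
    filter_upwards [this] with n hn s hs
    have := hn s hs
    rw [Real.dist_eq, abs_sub_comm] at this
    exact this.le
  have E2 : ∀ᶠ n in atTop, ∀ s ∈ Set.Icc (0:ℝ) (A + 1), |lmb n s - s| ≤ ηb := by
    have := (Metric.tendstoUniformlyOn_iff.mp (hlmb_id (A + 1) hA1)) ηb hηbpos
    filter_upwards [this] with n hn s hs
    have := hn s hs
    rw [Real.dist_eq, abs_sub_comm, id] at this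
    exact this.le
  have E3 : ∀ᶠ n in atTop, ∀ x : ℝ, 0 ≤ x → |F n x - Flim x| < min 1 dh := by
    have := (Metric.tendstoUniformlyOn_iff.mp hFconv) (min 1 dh) (lt_min one_pos hdh0)
    filter_upwards [this] with n hn x hx
    have := hn x hx
    rwa [Real.dist_eq, abs_sub_comm] at this
  have E4 : ∀ᶠ n in atTop,
      0 < aseq n ∧ aseq n ≤ A ∧ |aseq n - a| ≤ ε₀ ∧ 0 ≤ bseq n ∧ |bseq n - b| ≤ ε₀ := by
    have h1 := Metric.tendsto_nhds.mp haseq (min a ε₀) (lt_min ha hε₀pos)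
    have h2 := Metric.tendsto_nhds.mp hbseq (min b ε₀) (lt_min hb hε₀pos)
    filter_upwards [h1, h2] with n hn1 hn2
    rw [Real.dist_eq] at hn1 hn2
    have ha1 := abs_lt.mp hn1
    have hb1 := abs_lt.mp hn2
    have hminaε := min_le_left a ε₀
    have hminbε := min_le_left b ε₀
    have hmina2 := min_le_right a ε₀
    have hminb2 := min_le_right b ε₀
    refine ⟨by linarith [ha1.1], by rw [hA]; linarith [ha1.2], ?_, by linarith [hb1.1], ?_⟩
    · rw [abs_sub_le_iff]; constructor <;> linarith [ha1.1, ha1.2]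
    · rw [abs_sub_le_iff]; constructor <;> linarith [hb1.1, hb1.2]
  have E5 := hweakΨ ε₀ hε₀pos
  filter_upwards [E1, E2, E3, E4, E5] with n e1 e2 e3 e4 e5
  obtain ⟨han0, hanA, hana, hbn0, hbnb⟩ := e4
  obtain ⟨hlmbc, hlmbm, hlmbb⟩ := hlmb_prop n
  -- basic facts about F n
  have hF0 : F n 0 = 0 := by
    have h0a : (0:ℝ) ∈ Set.Icc 0 (aseq n) := ⟨le_rfl, han0.le⟩
    have h1 : F n 0 ∈ Set.Icc 0 (bseq n) := (hF_bij n).mapsTo h0a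
    obtain ⟨y, hy, hFy⟩ := (hF_bij n).surjOn (⟨le_rfl, hbn0⟩ : (0:ℝ) ∈ Set.Icc 0 (bseq n))
    have h2 : F n 0 ≤ F n y := (hF_mono n).monotoneOn h0a hy hy.1
    rw [hFy] at h2
    linarith [h1.1]
  have hFan : F n (aseq n) = bseq n := by
    have haa : aseq n ∈ Set.Icc 0 (aseq n) := ⟨han0.le, le_rfl⟩
    have h1 : F n (aseq n) ∈ Set.Icc 0 (bseq n) := (hF_bij n).mapsTo haa
    obtain ⟨y, hy, hFy⟩ :=
      (hF_bij n).surjOn (⟨hbn0, le_rfl⟩ : bseq n ∈ Set.Icc 0 (bseq n))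
    have h2 : F n y ≤ F n (aseq n) := (hF_mono n).monotoneOn hy haa hy.2
    rw [hFy] at h2
    linarith [h1.2]
  have hFmonoI : ∀ x z : ℝ, 0 ≤ x → x ≤ z → F n x ≤ F n z := by
    intro x z hx hxz
    rcases le_or_gt z (aseq n) with hz | hz
    · exact (hF_mono n).monotoneOn ⟨hx, hxz.trans hz⟩ ⟨hx.trans hxz, hz⟩ hxz
    · rcases le_or_gt x (aseq n) with hx' | hx'
      · have h1 : F n x ∈ Set.Icc 0 (bseq n) := (hF_bij n).mapsTo ⟨hx, hx'⟩
        rw [hF_ext n z hz]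
        exact h1.2
      · rw [hF_ext n x hx', hF_ext n z hz]
  -- facts about G n
  have hGfact : ∀ x ∈ Set.Icc 0 (bseq n), G n x ∈ Set.Icc 0 (aseq n) ∧ F n (G n x) = x := by
    intro x hx
    obtain ⟨y, hy, hFy⟩ := (hF_bij n).surjOn hx
    have hGx : G n x = y := by rw [← hFy, (hG n).1 hy]
    rw [hGx, hFy]
    exact ⟨hy, rfl⟩
  -- per-n clamped functions
  set prj : ℝ → ℝ := fun x => max 0 (min x (aseq n)) with hprjdef
  have hprj_mem : ∀ x, prj x ∈ Set.Icc 0 (aseq n) :=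
    fun x => ⟨le_max_left _ _, max_le han0.le (min_le_right _ _)⟩
  have hprj_id : ∀ x ∈ Set.Icc 0 (aseq n), prj x = x := by
    intro x hx
    rw [hprjdef]
    simp only [min_eq_left hx.2, max_eq_right hx.1]
  have hprj_cont : Continuous prj := continuous_const.max (continuous_id.min continuous_const)
  set Fc : ℝ → ℝ := fun x => F n (prj x) with hFcdef
  set D : ℝ → ℝ := fun x => F' n (prj x) with hDdef
  have hFc_cont : Continuous Fc :=
    (hF_cont n).comp_continuous hprj_cont hprj_mem
  have hD_meas : Measurable D := by
    have h1 : Measurable (fun u : ℝ => F' n (max 0 u)) :=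
      measurable_of_rightCont (measurable_clamp_of_rightCont (hF'_cadlag n).1)
    exact h1.comp (measurable_id.min measurable_const)
  have hFc_eq : ∀ x ∈ Set.Icc 0 (aseq n), Fc x = F n x :=
    fun x hx => by rw [hFcdef]; simp only [hprj_id x hx]
  have hD_eq : ∀ x ∈ Set.Icc 0 (aseq n), D x = F' n x :=
    fun x hx => by rw [hDdef]; simp only [hprj_id x hx]
  -- measurability of the f-sets
  have hfcl_meas : Measurable (fun u : ℝ => f n (max 0 u)) :=
    measurable_of_rightCont (measurable_clamp_of_rightCont (hf_cadlag n).1)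
  set En : Set ℝ := {x : ℝ | 0 ≤ x ∧ x ≤ aseq n ∧ f n x = 1} with hEndef
  set En' : Set ℝ := {x : ℝ | 0 ≤ x ∧ x ≤ bseq n ∧ f n (G n x) = 1} with hEn'def
  have hEnMeas : MeasurableSet En := by
    have heq : En = Set.Ici 0 ∩ Set.Iic (aseq n) ∩
        ((fun u : ℝ => f n (max 0 u)) ⁻¹' {1}) := by
      ext x
      simp only [hEndef, Set.mem_setOf_eq, Set.mem_inter_iff, Set.mem_Ici, Set.mem_Iic,
        Set.mem_preimage, Set.mem_singleton_iff]
      constructor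
      · rintro ⟨h1, h2, h3⟩
        rw [max_eq_right h1]
        exact ⟨⟨h1, h2⟩, h3⟩
      · rintro ⟨⟨h1, h2⟩, h3⟩
        rw [max_eq_right h1] at h3
        exact ⟨h1, h2, h3⟩
    rw [heq]
    exact (measurableSet_Ici.inter measurableSet_Iic).inter
      (hfcl_meas (measurableSet_singleton 1))
  have hGmono : ∀ x z, x ∈ Set.Icc 0 (bseq n) → z ∈ Set.Icc 0 (bseq n) → x ≤ z →
      G n x ≤ G n z := by
    intro x z hx hz hxz
    by_contra hcon
    push_neg at hcon
    have h1 := (hF_mono n) (hGfact z hz).1 (hGfact x hx).1 hcon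
    rw [(hGfact z hz).2, (hGfact x hx).2] at h1
    linarith
  set Gcl : ℝ → ℝ := fun x => G n (max 0 (min x (bseq n))) with hGcldef
  have hGcl_mono : Monotone Gcl := by
    intro x z hxz
    have hx : max 0 (min x (bseq n)) ∈ Set.Icc 0 (bseq n) :=
      ⟨le_max_left _ _, max_le hbn0 (min_le_right _ _)⟩
    have hz : max 0 (min z (bseq n)) ∈ Set.Icc 0 (bseq n) :=
      ⟨le_max_left _ _, max_le hbn0 (min_le_right _ _)⟩
    exact hGmono _ _ hx hz (max_le_max le_rfl (min_le_min_right _ hxz))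
  have hGcl_meas : Measurable Gcl := hGcl_mono.measurable
  have hEn'Meas : MeasurableSet En' := by
    have heq : En' = Set.Ici 0 ∩ Set.Iic (bseq n) ∩
        ((fun x : ℝ => f n (max 0 (Gcl x))) ⁻¹' {1}) := by
      ext x
      simp only [hEn'def, Set.mem_setOf_eq, Set.mem_inter_iff, Set.mem_Ici, Set.mem_Iic,
        Set.mem_preimage, Set.mem_singleton_iff]
      constructor
      · rintro ⟨h1, h2, h3⟩
        have hxb : x ∈ Set.Icc 0 (bseq n) := ⟨h1, h2⟩
        have hGmem := (hGfact x hxb).1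
        rw [hGcldef]
        simp only [min_eq_left h2, max_eq_right h1, max_eq_right hGmem.1]
        exact ⟨⟨h1, h2⟩, h3⟩
      · rintro ⟨⟨h1, h2⟩, h3⟩
        have hxb : x ∈ Set.Icc 0 (bseq n) := ⟨h1, h2⟩
        have hGmem := (hGfact x hxb).1
        rw [hGcldef] at h3
        simp only [min_eq_left h2, max_eq_right h1, max_eq_right hGmem.1] at h3
        exact ⟨h1, h2, h3⟩
    rw [heq]
    exact (measurableSet_Ici.inter measurableSet_Iic).inter
      ((hfcl_meas.comp hGcl_meas) (measurableSet_singleton 1))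
  -- nonnegativity and per-n bound of D
  have hDnn : ∀ x ∈ Set.Icc 0 (aseq n), 0 ≤ D x := by
    intro x hx
    rw [hD_eq x hx]
    exact hasDerivWithinAt_nonneg_of_mono (hF_deriv n x hx.1)
      (fun z hz => hFmonoI x z hx.1 hz)
  obtain ⟨MD, hMD0, hMDbd⟩ := cadPart_bound zero_le_one
    (cadlag_partition (hF'_cadlag n).1 (hF'_cadlag n).2 han0 one_pos)
  have hDbd : ∀ x, |D x| ≤ MD :=
    fun x => hMDbd (prj x) (hprj_mem x).1 (hprj_mem x).2
  -- FTC for F n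
  have hFTC : ∀ v ∈ Set.Icc 0 (aseq n), ∫ y in Set.Icc 0 v, D y = Fc v := by
    intro v hv
    have hint : IntervalIntegrable D volume 0 v :=
      ⟨integrableOn_of_bdd hD_meas measurableSet_Ioc measure_Ioc_lt_top (fun x _ => hDbd x),
       integrableOn_of_bdd hD_meas measurableSet_Ioc measure_Ioc_lt_top (fun x _ => hDbd x)⟩
    have hderiv : ∀ x ∈ Set.Ioo 0 v, HasDerivWithinAt (F n) (D x) (Set.Ioi x) x := by
      intro x hx
      rw [hD_eq x ⟨hx.1.le, hx.2.le.trans hv.2⟩]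
      exact (hF_deriv n x hx.1.le).mono Set.Ioi_subset_Ici_self
    have := intervalIntegral.integral_eq_sub_of_hasDeriv_right_of_le hv.1
      ((hF_cont n).mono (Set.Icc_subset_Icc le_rfl hv.2)) hderiv hint
    rw [hF0, sub_zero] at this
    rw [MeasureTheory.integral_Icc_eq_integral_Ioc,
      ← intervalIntegral.integral_of_le hv.1, this, hFc_eq v hv]
  -- pushforward facts
  have hFcmono : StrictMonoOn Fc (Set.Icc 0 (aseq n)) := by
    intro x hx z hz hxz
    rw [hFc_eq x hx, hFc_eq z hz]
    exact (hF_mono n) hx hz hxz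
  have hFcbij : Set.BijOn Fc (Set.Icc 0 (aseq n)) (Set.Icc 0 (bseq n)) :=
    (hF_bij n).congr (fun x hx => (hFc_eq x hx).symm)
  have hFcInv : Set.InvOn (G n) Fc (Set.Icc 0 (aseq n)) (Set.Icc 0 (bseq n)) := by
    constructor
    · intro y hy
      rw [hFc_eq y hy]
      exact (hG n).1 hy
    · intro x hx
      rw [hFc_eq _ (hGfact x hx).1]
      exact (hGfact x hx).2
  have hEn'sub : En' ⊆ Set.Icc 0 (bseq n) := fun x hx => ⟨hx.1, hx.2.1⟩
  have hEnsub : En ⊆ Set.Icc 0 (aseq n) := fun x hx => ⟨hx.1, hx.2.1⟩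
  set Φ : ℝ → ℝ := fun y => h (Fc y) * D y with hΦdef
  have hΦmeas : Measurable Φ := ((hcont.measurable).comp hFc_cont.measurable).mul hD_meas
  -- change of variables for the indicator integral
  have hPW1 : ∫ x in Set.Icc 0 (bseq n), (En'.indicator h) x =
      ∫ y in Set.Icc 0 (aseq n), (En'.indicator h) (Fc y) * D y :=
    pushforward_eq han0.le hFc_cont.measurable hFcmono hFcbij hFcInv hD_meas hDbd hDnn hFTC
      (En'.indicator h) (hcont.measurable.indicator hEn'Meas)
  have hPW2 : ∫ x in Set.Icc 0 (bseq n), h x = ∫ y in Set.Icc 0 (aseq n), Φ y :=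
    pushforward_eq han0.le hFc_cont.measurable hFcmono hFcbij hFcInv hD_meas hDbd hDnn hFTC
      h hcont.measurable
  have hT : ∫ x in En', h x = ∫ y in En, Φ y := by
    have hL : ∫ x in Set.Icc 0 (bseq n), (En'.indicator h) x = ∫ x in En', h x := by
      rw [setIntegral_indicator hEn'Meas, Set.inter_eq_right.mpr hEn'sub]
    have hRcongr : ∀ y ∈ Set.Icc 0 (aseq n),
        (En'.indicator h) (Fc y) * D y = (En.indicator Φ) y := by
      intro y hy
      have hFy : F n y ∈ Set.Icc 0 (bseq n) := (hF_bij n).mapsTo hy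
      have hGFy : G n (F n y) = y := (hG n).1 hy
      rw [hFc_eq y hy]
      rcases eq_or_ne (f n y) 1 with hfy | hfy
      · have hmem' : F n y ∈ En' := by
          rw [hEn'def]
          exact ⟨hFy.1, hFy.2, by rw [hGFy, hfy]⟩
        have hmem : y ∈ En := ⟨hy.1, hy.2, hfy⟩
        rw [Set.indicator_of_mem hmem' h, Set.indicator_of_mem hmem Φ, hΦdef]
        simp only [hFc_eq y hy]
      · have hmem' : F n y ∉ En' := by
          rw [hEn'def]
          rintro ⟨-, -, hc⟩
          rw [hGFy] at hc
          exact hfy hc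
        have hmem : y ∉ En := by
          rintro ⟨-, -, hc⟩
          exact hfy hc
        rw [Set.indicator_of_notMem hmem' h, Set.indicator_of_notMem hmem Φ, zero_mul]
    have hR : ∫ y in Set.Icc 0 (aseq n), (En'.indicator h) (Fc y) * D y =
        ∫ y in En, Φ y := by
      rw [setIntegral_congr_fun measurableSet_Icc hRcongr,
        setIntegral_indicator hEnMeas, Set.inter_eq_right.mpr hEnsub]
    rw [← hL, hPW1, hR]
  -- pointwise estimates
  have hty : ∀ y ∈ Set.Icc 0 (aseq n), ∃ s, 0 ≤ s ∧ s ≤ A + 1 ∧ lmb n s = y := by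
    intro y hy
    obtain ⟨s, hs0, hsy⟩ := hlmbb.surjOn (show y ∈ Set.Ici (0:ℝ) from hy.1)
    refine ⟨s, hs0, ?_, hsy⟩
    by_contra hcon
    push_neg at hcon
    have h1 : lmb n (A + 1) < lmb n s :=
      hlmbm (Set.mem_Ici.mpr (by linarith)) hs0 hcon
    have h2 := e2 (A + 1) ⟨by linarith, le_rfl⟩
    have h2' := abs_le.mp h2
    have h3 : y ≤ A := hy.2.trans hanA
    rw [hsy] at h1
    linarith [h2'.1]
  have hkey : ∀ y ∈ Set.Icc 0 (aseq n),
      |Φ y - Ψ y| ≤ C * (2 * M + 1) ∧ (y ∉ Bad → |Φ y - Ψ y| ≤ (3 * C + M) * ε₀) := by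
    intro y hy
    obtain ⟨s, hs0, hsA, hsy⟩ := hty y hy
    have hyA : y ∈ Set.Icc 0 A := ⟨hy.1, hy.2.trans hanA⟩
    have hDy : D y = F' n y := hD_eq y hy
    have hFcy : Fc y = F n y := hFc_eq y hy
    have h1 : |F' n y - Flim' s| ≤ ε₀ := by
      have := e1 s ⟨hs0, hsA⟩
      rwa [hsy] at this
    have h2 : |s - y| ≤ ηb := by
      have := e2 s ⟨hs0, hsA⟩
      rw [hsy] at this
      rwa [abs_sub_comm] at this
    have h3 : |Flim' s| ≤ M := hMbd s hs0 hsA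
    have hDbd' : |D y| ≤ M + ε₀ := by
      rw [hDy]
      calc |F' n y| = |(F' n y - Flim' s) + Flim' s| := by ring_nf
        _ ≤ |F' n y - Flim' s| + |Flim' s| := abs_add_le _ _
        _ ≤ ε₀ + M := add_le_add h1 h3
        _ = M + ε₀ := by ring
    -- h-part
    have hFlimy : |Flim y| ≤ R0 := hR0 y hyA
    have hFny : |F n y - Flim y| < min 1 dh := e3 y hy.1
    have hFny1 : |F n y - Flim y| < 1 := lt_of_lt_of_le hFny (min_le_left _ _)
    have hFnydh : |F n y - Flim y| < dh := lt_of_lt_of_le hFny (min_le_right _ _)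
    have habs1 := abs_le.mp hFlimy
    have habs2 := abs_lt.mp hFny1
    have hhy : |h (F n y) - h (Flim y)| ≤ ε₀ := by
      have hmem1 : F n y ∈ Set.Icc (-(R0 + 1)) (R0 + 1) := by
        constructor <;> linarith
      have hmem2 : Flim y ∈ Set.Icc (-(R0 + 1)) (R0 + 1) := by
        constructor <;> linarith
      have := hdh (F n y) hmem1 (Flim y) hmem2 (by rwa [Real.dist_eq])
      rw [Real.dist_eq] at this
      exact this.le
    have hΨy : Ψ y = h (Flim y) * φ y := by
      rw [hΨdef, hFlcdef]
      simp only [max_eq_right hy.1]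
    have halg : Φ y - Ψ y = h (F n y) * (D y - φ y) + (h (F n y) - h (Flim y)) * φ y := by
      rw [hΦdef, hΨy]
      simp only [hFcy]
      ring
    constructor
    · -- crude bound
      have hb1 : |Φ y| ≤ C * (M + 1) := by
        rw [hΦdef]
        calc |h (Fc y) * D y| = |h (Fc y)| * |D y| := abs_mul _ _
          _ ≤ C * (M + ε₀) := mul_le_mul (hC _) hDbd' (abs_nonneg _) hC0
          _ ≤ C * (M + 1) := mul_le_mul_of_nonneg_left (by linarith) hC0
      have hb2 : |Ψ y| ≤ C * M := hΨbd y
      calc |Φ y - Ψ y| ≤ |Φ y| + |Ψ y| := abs_sub _ _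
        _ ≤ C * (M + 1) + C * M := add_le_add hb1 hb2
        _ = C * (2 * M + 1) := by ring
    · -- fine bound off the bad set
      intro hyBad
      have hgood : ∀ i, i < m → δ < |s - tc (i + 1)| := by
        intro i him
        have hyfar : 2 * δ < |y - tc (i + 1)| := by
          by_contra hcon
          push_neg at hcon
          apply hyBad
          rw [hBaddef]
          refine Set.mem_biUnion (Finset.mem_range.mpr him) ?_
          rw [Metric.mem_closedBall, Real.dist_eq]
          exact hcon
        calc δ = 2 * δ - δ := by ring
          _ < |y - tc (i + 1)| - |s - y| := by
              have : |s - y| ≤ δ := h2.trans hηbδ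
              linarith
          _ ≤ |s - tc (i + 1)| := by
              have := abs_sub_le y s (tc (i + 1))
              have h4 := abs_sub_comm y s
              linarith [abs_sub_le s y (tc (i+1)), abs_sub_comm y s]
      have h4 : |φ s - Flim' s| ≤ ε₀ := hφapp s hs0 hsA hgood
      have h5 : |φ s - φ y| ≤ ε₀ := by
        have hl := hφlip s y
        have hηb2 : ηb ≤ ε₀ * δ / (2 * M + 1) := min_le_right _ _
        calc |φ s - φ y| ≤ δ⁻¹ * (2 * M) * |s - y| := hl
          _ ≤ δ⁻¹ * (2 * M) * (ε₀ * δ / (2 * M + 1)) := by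
              apply mul_le_mul_of_nonneg_left (h2.trans hηb2)
              positivity
          _ = ε₀ * (2 * M / (2 * M + 1)) := by
              field_simp
          _ ≤ ε₀ * 1 := by
              apply mul_le_mul_of_nonneg_left _ hε₀pos.le
              rw [div_le_one (by linarith)]
              linarith
          _ = ε₀ := mul_one _
      have hDφ : |D y - φ y| ≤ 3 * ε₀ := by
        rw [hDy]
        calc |F' n y - φ y| = |(F' n y - Flim' s) + (Flim' s - φ s) + (φ s - φ y)| := by
              ring_nf
          _ ≤ |(F' n y - Flim' s) + (Flim' s - φ s)| + |φ s - φ y| := abs_add_le _ _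
          _ ≤ |F' n y - Flim' s| + |Flim' s - φ s| + |φ s - φ y| := by
              have := abs_add_le (F' n y - Flim' s) (Flim' s - φ s)
              linarith
          _ ≤ ε₀ + ε₀ + ε₀ := by
              have h4' : |Flim' s - φ s| ≤ ε₀ := by rwa [abs_sub_comm] at h4
              exact add_le_add (add_le_add h1 h4') h5
          _ = 3 * ε₀ := by ring
      rw [halg]
      calc |h (F n y) * (D y - φ y) + (h (F n y) - h (Flim y)) * φ y|
          ≤ |h (F n y) * (D y - φ y)| + |(h (F n y) - h (Flim y)) * φ y| := abs_add_le _ _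
        _ = |h (F n y)| * |D y - φ y| + |h (F n y) - h (Flim y)| * |φ y| := by
            rw [abs_mul, abs_mul]
        _ ≤ C * (3 * ε₀) + ε₀ * M := by
            apply add_le_add
            · exact mul_le_mul (hC _) hDφ (abs_nonneg _) hC0
            · exact mul_le_mul hhy (hφbd y) (abs_nonneg _) hε₀pos.le
        _ = (3 * C + M) * ε₀ := by ring
  -- integral estimate over measurable subsets of [0, aseq n]
  set err : ℝ := (3 * C + M) * ε₀ * A + C * (2 * M + 1) * ((m : ℝ) * (4 * δ)) with herrdef
  have hfineNN : 0 ≤ (3 * C + M) * ε₀ := mul_nonneg (by linarith) hε₀pos.le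
  have hcrudeNN : 0 ≤ C * (2 * M + 1) := mul_nonneg hC0 (by linarith)
  have hest : ∀ S : Set ℝ, MeasurableSet S → S ⊆ Set.Icc 0 (aseq n) →
      |(∫ y in S, Φ y) - ∫ y in S, Ψ y| ≤ err := by
    intro S hS hSsub
    have hSB : MeasurableSet (S \ Bad) := hS.diff hBadMeas
    have hSB' : MeasurableSet (S ∩ Bad) := hS.inter hBadMeas
    have hfin : ∀ U : Set ℝ, U ⊆ Set.Icc 0 (aseq n) → volume U < ⊤ := fun U hU =>
      lt_of_le_of_lt (measure_mono hU) measure_Icc_lt_top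
    have hΨmeas : Measurable Ψ := hΨcont.measurable
    have hdiffmeas : Measurable (fun y => Φ y - Ψ y) := hΦmeas.sub hΨmeas
    have hΦΨbd : ∀ y ∈ S, |Φ y - Ψ y| ≤ C * (2 * M + 1) :=
      fun y hy => (hkey y (hSsub hy)).1
    have hint1 : IntegrableOn (fun y => Φ y - Ψ y) (S \ Bad) :=
      integrableOn_of_bdd hdiffmeas hSB (hfin _ (Set.diff_subset.trans hSsub))
        (fun x hx => hΦΨbd x hx.1)
    have hint2 : IntegrableOn (fun y => Φ y - Ψ y) (S ∩ Bad) :=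
      integrableOn_of_bdd hdiffmeas hSB' (hfin _ (Set.inter_subset_left.trans hSsub))
        (fun x hx => hΦΨbd x hx.1)
    have hintΦ : IntegrableOn Φ S :=
      integrableOn_of_bdd hΦmeas hS (hfin _ hSsub) (fun x _ => by
        rw [hΦdef]
        calc |h (Fc x) * D x| = |h (Fc x)| * |D x| := abs_mul _ _
          _ ≤ C * MD := mul_le_mul (hC _) (hDbd x) (abs_nonneg _) hC0)
    have hintΨ : IntegrableOn Ψ S :=
      integrableOn_of_bdd hΨmeas hS (hfin _ hSsub) (fun x _ => hΨbd x)
    have hsub : (∫ y in S, Φ y) - ∫ y in S, Ψ y = ∫ y in S, (Φ y - Ψ y) :=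
      (integral_sub hintΦ hintΨ).symm
    have hsplit : ∫ y in S, (Φ y - Ψ y) =
        (∫ y in S \ Bad, (Φ y - Ψ y)) + ∫ y in S ∩ Bad, (Φ y - Ψ y) := by
      rw [← setIntegral_union Set.disjoint_sdiff_inter hSB' hint1 hint2,
        Set.diff_union_inter]
    have hb1 : |∫ y in S \ Bad, (Φ y - Ψ y)| ≤ (3 * C + M) * ε₀ * A := by
      have hb := norm_setIntegral_le_of_bdd (hfin _ (Set.diff_subset.trans hSsub)) hSB
        (fun x hx => (hkey x (hSsub hx.1)).2 hx.2)
      refine le_trans hb ?_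
      apply mul_le_mul_of_nonneg_left _ hfineNN
      have h1 : volume (S \ Bad) ≤ ENNReal.ofReal A := by
        refine le_trans (measure_mono (Set.diff_subset.trans hSsub)) ?_
        rw [Real.volume_Icc, sub_zero]
        exact ENNReal.ofReal_le_ofReal hanA
      calc (volume (S \ Bad)).toReal ≤ (ENNReal.ofReal A).toReal :=
            ENNReal.toReal_mono ENNReal.ofReal_ne_top h1
        _ = A := ENNReal.toReal_ofReal hA0.le
    have hb2 : |∫ y in S ∩ Bad, (Φ y - Ψ y)| ≤ C * (2 * M + 1) * ((m : ℝ) * (4 * δ)) := by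
      have hb := norm_setIntegral_le_of_bdd (hfin _ (Set.inter_subset_left.trans hSsub)) hSB'
        (fun x hx => hΦΨbd x hx.1)
      refine le_trans hb ?_
      apply mul_le_mul_of_nonneg_left _ hcrudeNN
      have h1 : volume (S ∩ Bad) ≤ ENNReal.ofReal ((m : ℝ) * (4 * δ)) :=
        le_trans (measure_mono Set.inter_subset_right) hBadVol
      calc (volume (S ∩ Bad)).toReal ≤ (ENNReal.ofReal ((m : ℝ) * (4 * δ))).toReal :=
            ENNReal.toReal_mono ENNReal.ofReal_ne_top h1
        _ = (m : ℝ) * (4 * δ) := ENNReal.toReal_ofReal (by positivity)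
    rw [hsub, hsplit, herrdef]
    calc |(∫ y in S \ Bad, (Φ y - Ψ y)) + ∫ y in S ∩ Bad, (Φ y - Ψ y)|
        ≤ |∫ y in S \ Bad, (Φ y - Ψ y)| + |∫ y in S ∩ Bad, (Φ y - Ψ y)| := abs_add_le _ _
      _ ≤ (3 * C + M) * ε₀ * A + C * (2 * M + 1) * ((m : ℝ) * (4 * δ)) := add_le_add hb1 hb2
  -- assemble the chain
  have hest1 := hest En hEnMeas hEnsub
  have hest2 := hest (Set.Icc 0 (aseq n)) measurableSet_Icc subset_rfl
  rw [Real.dist_eq] at e5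
  have hCM0 : 0 ≤ C * M := mul_nonneg hC0 hM0
  have hIc1 : |(∫ x in Set.Icc 0 (aseq n), Ψ x) - ∫ x in Set.Icc 0 a, Ψ x| ≤ C * M * ε₀ := by
    refine le_trans (integral_Icc_close hΨcont.measurable hΨbd ha.le han0.le) ?_
    exact mul_le_mul_of_nonneg_left hana hCM0
  have hIc2 : |(∫ x in Set.Icc 0 (bseq n), h x) - ∫ x in Set.Icc 0 b, h x| ≤ C * ε₀ := by
    refine le_trans (integral_Icc_close hcont.measurable hC hb.le hbn0) ?_
    exact mul_le_mul_of_nonneg_left hbnb hC0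
  have ht3 : |(∫ x in Set.Icc 0 a, Ψ x) - ∫ x in Set.Icc 0 b, h x| ≤
      C * M * ε₀ + err + C * ε₀ := by
    have htri : |(∫ x in Set.Icc 0 a, Ψ x) - ∫ x in Set.Icc 0 b, h x| ≤
        |(∫ x in Set.Icc 0 a, Ψ x) - ∫ x in Set.Icc 0 (aseq n), Ψ x| +
        |(∫ x in Set.Icc 0 (aseq n), Ψ x) - ∫ x in Set.Icc 0 (bseq n), h x| +
        |(∫ x in Set.Icc 0 (bseq n), h x) - ∫ x in Set.Icc 0 b, h x| := by
      have u1 := abs_sub_le (∫ x in Set.Icc 0 a, Ψ x) (∫ x in Set.Icc 0 (aseq n), Ψ x)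
        (∫ x in Set.Icc 0 b, h x)
      have u2 := abs_sub_le (∫ x in Set.Icc 0 (aseq n), Ψ x) (∫ x in Set.Icc 0 (bseq n), h x)
        (∫ x in Set.Icc 0 b, h x)
      linarith
    have hmid : |(∫ x in Set.Icc 0 (aseq n), Ψ x) - ∫ x in Set.Icc 0 (bseq n), h x| ≤ err := by
      rw [hPW2, abs_sub_comm]
      exact hest2
    have h1 : |(∫ x in Set.Icc 0 a, Ψ x) - ∫ x in Set.Icc 0 (aseq n), Ψ x| ≤ C * M * ε₀ := by
      rwa [abs_sub_comm] at hIc1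
    linarith
  have hmain : |(∫ x in En', h x) - lam * ∫ x in Set.Icc 0 b, h x| <
      err + ε₀ + lam * (C * M * ε₀ + err + C * ε₀) := by
    have htri : |(∫ x in En', h x) - lam * ∫ x in Set.Icc 0 b, h x| ≤
        |(∫ y in En, Φ y) - ∫ y in En, Ψ y| +
        |(∫ y in En, Ψ y) - lam * ∫ x in Set.Icc 0 a, Ψ x| +
        |lam * (∫ x in Set.Icc 0 a, Ψ x) - lam * ∫ x in Set.Icc 0 b, h x| := by
      rw [hT]
      have u1 := abs_sub_le (∫ y in En, Φ y) (∫ y in En, Ψ y)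
        (lam * ∫ x in Set.Icc 0 b, h x)
      have u2 := abs_sub_le (∫ y in En, Ψ y) (lam * ∫ x in Set.Icc 0 a, Ψ x)
        (lam * ∫ x in Set.Icc 0 b, h x)
      linarith
    have hlast : |lam * (∫ x in Set.Icc 0 a, Ψ x) - lam * ∫ x in Set.Icc 0 b, h x| ≤
        lam * (C * M * ε₀ + err + C * ε₀) := by
      rw [← mul_sub, abs_mul, abs_of_nonneg hlam]
      exact mul_le_mul_of_nonneg_left ht3 hlam
    have he5' : |(∫ y in En, Ψ y) - lam * ∫ x in Set.Icc 0 a, Ψ x| < ε₀ := e5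
    linarith
  -- final numeric bound
  have hK1b : K1 * ε₀ ≤ ε' / 4 := by
    have h1 : ε₀ ≤ ε' / (4 * (K1 + 1)) := min_le_right _ _
    have h2 : K1 * ε₀ ≤ (K1 + 1) * ε₀ :=
      mul_le_mul_of_nonneg_right (by linarith) hε₀pos.le
    have h3 : (K1 + 1) * ε₀ ≤ (K1 + 1) * (ε' / (4 * (K1 + 1))) :=
      mul_le_mul_of_nonneg_left h1 (by linarith)
    have h4 : (K1 + 1) * (ε' / (4 * (K1 + 1))) = ε' / 4 := by
      field_simp
    linarith
  have hK2b : K2 * δ ≤ ε' / 4 := by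
    have h1 : δ ≤ ε' / (4 * K2) := min_le_right _ _
    have h3 : K2 * δ ≤ K2 * (ε' / (4 * K2)) := mul_le_mul_of_nonneg_left h1 hK2pos.le
    have h4 : K2 * (ε' / (4 * K2)) = ε' / 4 := by
      field_simp
    linarith
  have hcoef : (1 + lam) * (C * (2 * M + 1)) * (4 * (m : ℝ)) ≤ K2 := by
    rw [hK2def]
    have h1 : 0 ≤ (1 + lam) * (4 * C * (2 * M + 1)) :=
      mul_nonneg (by linarith) (mul_nonneg (mul_nonneg (by norm_num) hC0) (by linarith))
    have heq : (1 + lam) * (4 * C * (2 * M + 1)) * ((m : ℝ) + 1) + 1 -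
        (1 + lam) * (C * (2 * M + 1)) * (4 * (m : ℝ)) =
        (1 + lam) * (4 * C * (2 * M + 1)) + 1 := by ring
    linarith
  have hiden : err + ε₀ + lam * (C * M * ε₀ + err + C * ε₀) =
      K1 * ε₀ + (1 + lam) * (C * (2 * M + 1)) * (4 * (m : ℝ)) * δ := by
    rw [herrdef, hK1def]
    ring
  have hterm2 : (1 + lam) * (C * (2 * M + 1)) * (4 * (m : ℝ)) * δ ≤ K2 * δ :=
    mul_le_mul_of_nonneg_right hcoef hδpos.le
  show dist (∫ x in {x : ℝ | 0 ≤ x ∧ x ≤ bseq n ∧ f n (G n x) = 1}, h x)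
    (lam * ∫ x in Set.Icc (0:ℝ) b, h x) < ε'
  rw [Real.dist_eq]
  have : |(∫ x in En', h x) - lam * ∫ x in Set.Icc 0 b, h x| < ε' := by
    calc |(∫ x in En', h x) - lam * ∫ x in Set.Icc 0 b, h x| <
        err + ε₀ + lam * (C * M * ε₀ + err + C * ε₀) := hmain
      _ = K1 * ε₀ + (1 + lam) * (C * (2 * M + 1)) * (4 * (m : ℝ)) * δ := hiden
      _ ≤ ε' / 4 + ε' / 4 := add_le_add hK1b (le_trans hterm2 hK2b)
      _ < ε' := by linarith
  exact this
end
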